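/- arXiv:1910.10127 — 8 statements merged into one kernel-verified Lean document; each statement's English description precedes it below -/
import Mathlib

section
/- Let n ≥ 1, 0 ≤ m ≤ n, and let M, K be n×n complex matrices. The function f : ℝ → ℂ defined by f(t) = D_m(M*M + t·M*[M,K]) is differentiable at t = 0 and satisfies |f′(0)| ≤ 2·n·‖K‖_HS·|D_m(M*M)| (note D_m(M*M) is a nonnegative real number). -/
open Matrix Polynomial Finset

/-- For an `n × n` matrix `X`, `Dm n m X` is `(-1)^(n-m)` times the coefficient of `x^m`
in the characteristic polynomial of `X`. -/
noncomputable def Dm (n m : ℕ) (X : Matrix (Fin n) (Fin n) ℂ) : ℂ :=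
  (-1 : ℂ) ^ (n - m) * (Matrix.charpoly X).coeff m

/-- The Hilbert–Schmidt (Frobenius) norm of a complex matrix. -/
noncomputable def hsNorm (n : ℕ) (K : Matrix (Fin n) (Fin n) ℂ) : ℝ :=
  Real.sqrt (∑ i, ∑ j, ‖K i j‖ ^ 2)

lemma abs_quadform_le (n : ℕ) (K : Matrix (Fin n) (Fin n) ℂ) (v w : Fin n → ℂ) :
    ‖∑ j, ∑ k, (starRingEnd ℂ) (v j) * K j k * w k‖ ≤
      Real.sqrt (∑ j, ‖v j‖ ^ 2) * Real.sqrt (∑ k, ‖w k‖ ^ 2) * hsNorm n K := by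
  have h1 : ∀ j, ‖∑ k, K j k * w k‖ ≤
      Real.sqrt (∑ k, ‖K j k‖ ^ 2) * Real.sqrt (∑ k, ‖w k‖ ^ 2) := by
    intro j
    calc ‖∑ k, K j k * w k‖ ≤ ∑ k, ‖K j k * w k‖ :=
          norm_sum_le _ _
      _ = ∑ k, ‖K j k‖ * ‖w k‖ := by simp [norm_mul]
      _ ≤ _ := Real.sum_mul_le_sqrt_mul_sqrt _ _ _
  calc ‖∑ j, ∑ k, (starRingEnd ℂ) (v j) * K j k * w k‖
      = ‖∑ j, (starRingEnd ℂ) (v j) * ∑ k, K j k * w k‖ := by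
        congr 1; refine Finset.sum_congr rfl fun j _ => ?_
        rw [Finset.mul_sum]; refine Finset.sum_congr rfl fun k _ => by ring
    _ ≤ ∑ j, ‖(starRingEnd ℂ) (v j) * ∑ k, K j k * w k‖ := norm_sum_le _ _
    _ = ∑ j, ‖v j‖ * ‖∑ k, K j k * w k‖ := by
        simp [norm_mul]
    _ ≤ Real.sqrt (∑ j, ‖v j‖ ^ 2) * Real.sqrt (∑ j, (‖∑ k, K j k * w k‖) ^ 2) := by
        simpa using Real.sum_mul_le_sqrt_mul_sqrt Finset.univ (fun j => ‖v j‖)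
          (fun j => ‖∑ k, K j k * w k‖)
    _ ≤ Real.sqrt (∑ j, ‖v j‖ ^ 2) *
        Real.sqrt (∑ j, (∑ k, ‖K j k‖ ^ 2) * (∑ k, ‖w k‖ ^ 2)) := by
        gcongr with j hj
        have := pow_le_pow_left₀ (norm_nonneg _) (h1 j) 2
        rw [mul_pow, Real.sq_sqrt (by positivity), Real.sq_sqrt (by positivity)] at this
        exact this
    _ = Real.sqrt (∑ j, ‖v j‖ ^ 2) * Real.sqrt (∑ k, ‖w k‖ ^ 2) * hsNorm n K := by
        rw [← Finset.sum_mul, Real.sqrt_mul (by positivity), hsNorm]; ring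


lemma charpoly_unitary_conj (U A : Matrix (Fin n) (Fin n) ℂ)
    (hU : U ∈ Matrix.unitaryGroup (Fin n) ℂ) :
    (star U * A * U).charpoly = A.charpoly := by
  have h1 : star U * U = 1 := Unitary.star_mul_self_of_mem hU
  have hcm : charmatrix (star U * A * U) =
      (star U).map C * charmatrix A * U.map C := by
    rw [charmatrix, charmatrix]
    simp only [RingHom.mapMatrix_apply]
    rw [mul_sub, sub_mul, Matrix.map_mul, Matrix.map_mul]
    congr 1
    have hc : (star U).map (C : ℂ →+* ℂ[X]) * Matrix.scalar (Fin n) (X : ℂ[X]) =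
        Matrix.scalar (Fin n) (X : ℂ[X]) * (star U).map C := by
      ext i j
      rw [scalar_apply]
      rw [Matrix.mul_diagonal, Matrix.diagonal_mul, mul_comm]
    rw [hc, mul_assoc, ← Matrix.map_mul, h1]
    simp
  have hdet : ((star U).map (C : ℂ →+* ℂ[X])).det * ((U).map (C : ℂ →+* ℂ[X])).det = 1 := by
    rw [← det_mul, ← Matrix.map_mul, h1]; simp
  calc (star U * A * U).charpoly
      = ((star U).map (C : ℂ →+* ℂ[X])).det * (charmatrix A).det * ((U).map (C : ℂ →+* ℂ[X])).det := by
        rw [Matrix.charpoly, hcm, det_mul, det_mul]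
    _ = ((star U).map (C : ℂ →+* ℂ[X])).det * ((U).map (C : ℂ →+* ℂ[X])).det * (charmatrix A).det := by
        ring
    _ = A.charpoly := by rw [hdet, one_mul, Matrix.charpoly]


lemma charpoly_diagonal (v : Fin n → ℂ) :
    (diagonal v).charpoly = ∏ i, (X - C (v i)) := by
  have : charmatrix (diagonal v) = diagonal (fun i => (X : ℂ[X]) - C (v i)) := by
    ext i j
    by_cases h : i = j
    · subst h; simp
    · simp [h, charmatrix_apply_ne _ _ _ h, diagonal_apply_ne _ h]
  rw [Matrix.charpoly, this, det_diagonal]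


lemma prod_X_sub_C_coeff_fin {ι : Type*} (s : Finset ι) (f : ι → ℂ) {k : ℕ} (h : k ≤ s.card) :
    (∏ i ∈ s, (X - C (f i))).coeff k =
      (-1 : ℂ) ^ (s.card - k) * ∑ t ∈ s.powersetCard (s.card - k), ∏ i ∈ t, f i := by
  have h1 : (∏ i ∈ s, (X - C (f i))) = ((s.val.map f).map (fun t => X - C t)).prod := by
    rw [Finset.prod, Multiset.map_map]; rfl
  have h2 : k ≤ Multiset.card (s.val.map f) := by simpa using h
  rw [h1, Multiset.prod_X_sub_C_coeff _ h2, Multiset.card_map, Finset.esymm_map_val]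
  rfl


lemma hasDerivAt_coeff_perm (n m : ℕ) (hm : m ≤ n) (dC : Fin n → ℂ)
    (B : Matrix (Fin n) (Fin n) ℂ) (σ : Equiv.Perm (Fin n)) :
    HasDerivAt (fun s : ℂ =>
        (∏ i, (charmatrix (diagonal dC + s • B)) (σ i) i).coeff m)
      (if σ = 1 then
        (-1 : ℂ) ^ (n - m) * ∑ S ∈ Finset.powersetCard (n - m) Finset.univ,
          ∑ i ∈ S, (∏ j ∈ S.erase i, dC j) * B i i
       else 0) 0 := by
  classical
  have hentry : ∀ (s : ℂ) i j, (diagonal dC + s • B) i j =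
      diagonal dC i j + s * B i j := by intro s i j; simp
  by_cases hσ : σ = 1
  · subst hσ
    simp only [if_pos rfl]
    have hfun : ∀ s : ℂ,
        (∏ i, (charmatrix (diagonal dC + s • B)) ((1 : Equiv.Perm (Fin n)) i) i).coeff m =
        (-1 : ℂ) ^ (n - m) * ∑ S ∈ Finset.powersetCard (n - m) Finset.univ,
          ∏ i ∈ S, (dC i + s * B i i) := by
      intro s
      have : ∀ i : Fin n, (charmatrix (diagonal dC + s • B)) ((1 : Equiv.Perm (Fin n)) i) i
          = X - C (dC i + s * B i i) := by
        intro i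
        simp [charmatrix_apply_eq, hentry s i i]
      rw [Finset.prod_congr rfl (fun i _ => this i)]
      rw [prod_X_sub_C_coeff_fin _ _ (by simpa using hm)]
      simp [Finset.card_univ]
    have hder : HasDerivAt (fun s : ℂ =>
        (-1 : ℂ) ^ (n - m) * ∑ S ∈ Finset.powersetCard (n - m) Finset.univ,
          ∏ i ∈ S, (dC i + s * B i i))
        ((-1 : ℂ) ^ (n - m) * ∑ S ∈ Finset.powersetCard (n - m) Finset.univ,
          ∑ i ∈ S, (∏ j ∈ S.erase i, dC j) * B i i) 0 := by
      refine HasDerivAt.const_mul _ ?_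
      have hS : ∀ S : Finset (Fin n), HasDerivAt (fun s : ℂ => ∏ i ∈ S, (dC i + s * B i i))
          (∑ i ∈ S, (∏ j ∈ S.erase i, dC j) * B i i) 0 := by
        intro S
        have h0 : ∀ i ∈ S, HasDerivAt (fun s : ℂ => dC i + s * B i i) (B i i) 0 := by
          intro i _
          simpa using ((hasDerivAt_id (0:ℂ)).mul_const (B i i)).const_add (dC i)
        have := HasDerivAt.fun_finsetProd (f := fun i s => dC i + s * B i i) (f' := fun i => B i i) h0
        simp only [zero_mul, add_zero, smul_eq_mul] at this
        exact this
      exact HasDerivAt.fun_sum (fun S _ => hS S)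
    exact hder.congr_of_eventuallyEq (Filter.Eventually.of_forall fun s => hfun s)
  · simp only [if_neg hσ]
    set F : Finset (Fin n) := σ.support with hF
    have k2 : 2 ≤ F.card := Equiv.Perm.one_lt_card_support_of_ne_one hσ
    set E0 : ℂ := ∏ i ∈ F, (-(B (σ i) i)) with hE0
    have hfun : ∀ s : ℂ,
        (∏ i, (charmatrix (diagonal dC + s • B)) (σ i) i).coeff m =
        ((∏ i ∈ Fᶜ, ((X : ℂ[X]) - C (dC i + s * B i i))).coeff m) * (s ^ F.card * E0) := by
      intro s
      have hsplit : (∏ i, (charmatrix (diagonal dC + s • B)) (σ i) i) =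
          (∏ i ∈ F, (charmatrix (diagonal dC + s • B)) (σ i) i) *
          (∏ i ∈ Fᶜ, (charmatrix (diagonal dC + s • B)) (σ i) i) :=
        (Finset.prod_mul_prod_compl F _).symm
      have hFprod : (∏ i ∈ F, (charmatrix (diagonal dC + s • B)) (σ i) i) =
          C (s ^ F.card * E0) := by
        have : ∀ i ∈ F, (charmatrix (diagonal dC + s • B)) (σ i) i =
            C (s * (-(B (σ i) i))) := by
          intro i hi
          have hne : σ i ≠ i := Equiv.Perm.mem_support.mp hi
          rw [charmatrix_apply_ne _ _ _ hne, hentry s (σ i) i,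
            Matrix.diagonal_apply_ne _ hne, zero_add, ← map_neg]
          ring_nf
        rw [Finset.prod_congr rfl this, ← map_prod, Finset.prod_mul_distrib,
          Finset.prod_const, hE0]
      have hFcprod : (∏ i ∈ Fᶜ, (charmatrix (diagonal dC + s • B)) (σ i) i) =
          ∏ i ∈ Fᶜ, ((X : ℂ[X]) - C (dC i + s * B i i)) := by
        refine Finset.prod_congr rfl fun i hi => ?_
        have heq : σ i = i := by
          have h' := Finset.mem_compl.mp hi
          exact Equiv.Perm.notMem_support.mp h'
        rw [heq, charmatrix_apply_eq, hentry s i i, Matrix.diagonal_apply_eq]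
      rw [hsplit, hFprod, hFcprod, mul_comm, coeff_mul_C]
    have hh : DifferentiableAt ℂ
        (fun s : ℂ => (∏ i ∈ Fᶜ, ((X : ℂ[X]) - C (dC i + s * B i i))).coeff m) 0 := by
      by_cases hmc : m ≤ Fᶜ.card
      · have hfun2 : ∀ s : ℂ,
            (∏ i ∈ Fᶜ, ((X : ℂ[X]) - C (dC i + s * B i i))).coeff m =
            (-1 : ℂ) ^ (Fᶜ.card - m) * ∑ S ∈ Finset.powersetCard (Fᶜ.card - m) Fᶜ,
              ∏ i ∈ S, (dC i + s * B i i) := by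
          intro s; rw [prod_X_sub_C_coeff_fin _ _ hmc]
        have hder : DifferentiableAt ℂ (fun s : ℂ =>
            (-1 : ℂ) ^ (Fᶜ.card - m) * ∑ S ∈ Finset.powersetCard (Fᶜ.card - m) Fᶜ,
              ∏ i ∈ S, (dC i + s * B i i)) 0 := by
          refine DifferentiableAt.const_mul ?_ _
          refine DifferentiableAt.fun_sum fun S _ => ?_
          refine DifferentiableAt.fun_finsetProd fun i _ => ?_
          exact (differentiableAt_id.mul_const _).const_add _
        exact hder.congr_of_eventuallyEq (Filter.Eventually.of_forall fun s => hfun2 s)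
      · have hzero : ∀ s : ℂ,
            (∏ i ∈ Fᶜ, ((X : ℂ[X]) - C (dC i + s * B i i))).coeff m = 0 := by
          intro s
          refine Polynomial.coeff_eq_zero_of_natDegree_lt ?_
          have : (∏ i ∈ Fᶜ, ((X : ℂ[X]) - C (dC i + s * B i i))).natDegree = Fᶜ.card := by
            rw [Polynomial.natDegree_prod _ _ (fun i _ => Polynomial.X_sub_C_ne_zero _)]
            simp only [← _root_.map_mul, ← _root_.map_add, Polynomial.natDegree_X_sub_C]
            simp
          omega
        exact (differentiableAt_const (0:ℂ)).congr_of_eventuallyEq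
          (Filter.Eventually.of_forall fun s => hzero s)
    have hg : HasDerivAt (fun s : ℂ => s ^ F.card * E0)
        (((F.card : ℂ) * 0 ^ (F.card - 1)) * E0) 0 := (hasDerivAt_pow F.card 0).mul_const E0
    have hprod := (hh.hasDerivAt.mul hg)
    have hval : deriv (fun s : ℂ =>
          (∏ i ∈ Fᶜ, ((X : ℂ[X]) - C (dC i + s * B i i))).coeff m) 0 * ((0:ℂ) ^ F.card * E0) +
        (∏ i ∈ Fᶜ, ((X : ℂ[X]) - C (dC i + (0:ℂ) * B i i))).coeff m *
          (((F.card : ℂ) * 0 ^ (F.card - 1)) * E0) = 0 := by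
      rw [zero_pow (by omega : F.card ≠ 0), zero_pow (by omega : F.card - 1 ≠ 0)]
      ring
    have := hval ▸ hprod
    exact this.congr_of_eventuallyEq (Filter.Eventually.of_forall fun s => hfun s)


lemma quad_entry {n : ℕ} (Y C : Matrix (Fin n) (Fin n) ℂ) (i : Fin n) :
    (Yᴴ * C * Y) i i = ∑ j, ∑ k, (starRingEnd ℂ) (Y j i) * C j k * Y k i := by
  rw [Matrix.mul_apply]
  rw [Finset.sum_comm]
  refine Finset.sum_congr rfl fun j _ => ?_
  rw [Matrix.mul_apply, Finset.sum_mul]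
  refine Finset.sum_congr rfl fun k _ => ?_
  simp only [Matrix.conjTranspose_apply, Complex.star_def]


lemma col_norm_sum {n : ℕ} (Y : Matrix (Fin n) (Fin n) ℂ) (i : Fin n) (c : ℝ)
    (h : (Yᴴ * Y) i i = (c : ℂ)) : ∑ j, ‖Y j i‖ ^ 2 = c := by
  have h2 : (Yᴴ * Y) i i = ((∑ j, ‖Y j i‖ ^ 2 : ℝ) : ℂ) := by
    rw [Matrix.mul_apply]
    push_cast
    refine Finset.sum_congr rfl fun j _ => ?_
    rw [Matrix.conjTranspose_apply, Complex.star_def, mul_comm, Complex.mul_conj]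
    rw [show ((‖Y j i‖ : ℂ) ^ 2 : ℂ) = ((‖Y j i‖ ^ 2 : ℝ) : ℂ) by push_cast; ring]
    rw [Complex.sq_norm]
  rw [h2] at h
  exact_mod_cast h


set_option maxHeartbeats 1000000 in
theorem stmt_1 (n : ℕ) (hn : 1 ≤ n) (m : ℕ) (hm : m ≤ n)
    (M K : Matrix (Fin n) (Fin n) ℂ) :
    ∃ f' : ℂ,
      HasDerivAt
        (fun t : ℝ =>
          Dm n m (Mᴴ * M + (t : ℂ) • (Mᴴ * (M * K - K * M))))
        f' 0 ∧
      ‖f'‖ ≤ 2 * (n : ℝ) * hsNorm n K * ‖Dm n m (Mᴴ * M)‖ := by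
  classical
  set A : Matrix (Fin n) (Fin n) ℂ := Mᴴ * M with hAdef
  set Bm : Matrix (Fin n) (Fin n) ℂ := Mᴴ * (M * K - K * M) with hBdef
  have hA : A.IsHermitian := Matrix.isHermitian_conjTranspose_mul_self M
  set U : Matrix (Fin n) (Fin n) ℂ := (hA.eigenvectorUnitary : Matrix (Fin n) (Fin n) ℂ)
    with hUdef
  have hUmem : U ∈ Matrix.unitaryGroup (Fin n) ℂ := (hA.eigenvectorUnitary).2
  have hUU : star U * U = 1 := Unitary.star_mul_self_of_mem hUmem
  have hUU' : U * star U = 1 := Unitary.mul_star_self_of_mem hUmem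
  set d : Fin n → ℝ := hA.eigenvalues with hddef
  have hd : ∀ i, 0 ≤ d i := by
    intro i
    have := Matrix.PosSemidef.eigenvalues_nonneg
      (𝕜 := ℂ) (A := A) ?hps i
    · exact this
    case hps =>
      open scoped ComplexOrder in
      exact Matrix.posSemidef_conjTranspose_mul_self M
  set dC : Fin n → ℂ := fun i => (d i : ℂ) with hdCdef
  have hdiag : star U * A * U = diagonal dC := by
    have h := hA.conjStarAlgAut_star_eigenvectorUnitary
    rw [Unitary.conjStarAlgAut_star_apply] at h
    exact h
  set B' : Matrix (Fin n) (Fin n) ℂ := star U * Bm * U with hB'def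
  -- similarity
  have hsim : ∀ s : ℂ, (A + s • Bm).charpoly = (diagonal dC + s • B').charpoly := by
    intro s
    have : diagonal dC + s • B' = star U * (A + s • Bm) * U := by
      rw [Matrix.mul_add, Matrix.add_mul, hdiag, Matrix.mul_smul, Matrix.smul_mul]
    rw [this, charpoly_unitary_conj _ _ hUmem]
  -- expansion of the coefficient as a sum over permutations
  have hexp : ∀ s : ℂ, Dm n m (A + s • Bm) =
      (-1 : ℂ) ^ (n - m) * ∑ σ : Equiv.Perm (Fin n),
        ((Equiv.Perm.sign σ : ℤ) : ℂ) *
          (∏ i, (charmatrix (diagonal dC + s • B')) (σ i) i).coeff m := by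
    intro s
    rw [Dm, hsim s]
    have h0 : (diagonal dC + s • B').charpoly = (charmatrix (diagonal dC + s • B')).det := rfl
    rw [h0, Matrix.det_apply, Polynomial.finset_sum_coeff]
    congr 1
    refine Finset.sum_congr rfl fun σ _ => ?_
    rw [Polynomial.coeff_smul, Units.smul_def, zsmul_eq_mul]
  -- the derivative
  set T : ℂ := ∑ S ∈ Finset.powersetCard (n - m) Finset.univ,
      ∑ i ∈ S, (∏ j ∈ S.erase i, dC j) * B' i i with hTdef
  have hderC : HasDerivAt (fun s : ℂ => Dm n m (A + s • Bm)) T 0 := by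
    have hsum : HasDerivAt (fun s : ℂ => (-1 : ℂ) ^ (n - m) * ∑ σ : Equiv.Perm (Fin n),
        ((Equiv.Perm.sign σ : ℤ) : ℂ) *
          (∏ i, (charmatrix (diagonal dC + s • B')) (σ i) i).coeff m)
        ((-1 : ℂ) ^ (n - m) * ∑ σ : Equiv.Perm (Fin n),
          ((Equiv.Perm.sign σ : ℤ) : ℂ) *
          (if σ = 1 then
            (-1 : ℂ) ^ (n - m) * ∑ S ∈ Finset.powersetCard (n - m) Finset.univ,
              ∑ i ∈ S, (∏ j ∈ S.erase i, dC j) * B' i i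
           else 0)) 0 := by
      refine HasDerivAt.const_mul _ ?_
      exact HasDerivAt.fun_sum fun σ _ =>
        (hasDerivAt_coeff_perm n m hm dC B' σ).const_mul _
    have hval : ((-1 : ℂ) ^ (n - m) * ∑ σ : Equiv.Perm (Fin n),
          ((Equiv.Perm.sign σ : ℤ) : ℂ) *
          (if σ = 1 then
            (-1 : ℂ) ^ (n - m) * ∑ S ∈ Finset.powersetCard (n - m) Finset.univ,
              ∑ i ∈ S, (∏ j ∈ S.erase i, dC j) * B' i i
           else 0)) = T := by
      simp only [mul_ite, mul_zero]
      rw [Finset.sum_ite_eq' Finset.univ (1 : Equiv.Perm (Fin n))]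
      simp only [Finset.mem_univ, if_pos, Equiv.Perm.sign_one]
      have h1 : ((-1 : ℂ) ^ (n - m)) * ((-1 : ℂ) ^ (n - m)) = 1 := by
        rw [← pow_add]
        exact Even.neg_one_pow ⟨n - m, by ring⟩
      rw [hTdef]
      push_cast
      rw [one_mul, ← mul_assoc, h1, one_mul]
    exact (hval ▸ hsum).congr_of_eventuallyEq (Filter.Eventually.of_forall fun s => hexp s)
  refine ⟨T, ?_, ?_⟩
  · have := hderC.comp_ofReal (z := 0)
    simpa using this
  · -- the bound
    have hs0 : 0 ≤ hsNorm n K := Real.sqrt_nonneg _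
    have hUA : star U * A = diagonal dC * star U := by
      have h2 : star U * A = (star U * A * U) * star U := by
        rw [Matrix.mul_assoc (star U * A), hUU', Matrix.mul_one]
      rw [h2, hdiag]
    set W : Matrix (Fin n) (Fin n) ℂ := M * U with hW
    have hWW : Wᴴ * W = diagonal dC := by
      have h3 : Uᴴ * Mᴴ * (M * U) = star U * A * U := by
        rw [Matrix.star_eq_conjTranspose, hAdef]
        simp only [Matrix.mul_assoc]
      rw [hW, Matrix.conjTranspose_mul, h3, hdiag]
    have hB'eq : B' = diagonal dC * (star U * K * U) - Wᴴ * K * W := by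
      rw [hB'def, hBdef]
      have e1 : Mᴴ * (M * K - K * M) = A * K - Mᴴ * (K * M) := by
        rw [Matrix.mul_sub, hAdef]
        simp only [Matrix.mul_assoc]
      have t1 : star U * (A * K) * U = diagonal dC * (star U * K * U) := by
        rw [show star U * (A * K) * U = (star U * A) * (K * U) from by
          simp only [Matrix.mul_assoc], hUA]
        simp only [Matrix.mul_assoc]
      have t2 : star U * (Mᴴ * (K * M)) * U = Wᴴ * K * W := by
        rw [hW, Matrix.conjTranspose_mul, Matrix.star_eq_conjTranspose]
        simp only [Matrix.mul_assoc]
      rw [e1, Matrix.mul_sub, Matrix.sub_mul, t1, t2]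
    have hKii : ∀ i, ‖(star U * K * U) i i‖ ≤ hsNorm n K := by
      intro i
      have hq : (star U * K * U) i i =
          ∑ j, ∑ k, (starRingEnd ℂ) (U j i) * K j k * U k i := by
        rw [Matrix.star_eq_conjTranspose]; exact quad_entry U K i
      have h1 : ∑ j, ‖U j i‖ ^ 2 = (1 : ℝ) := by
        refine col_norm_sum U i 1 ?_
        rw [← Matrix.star_eq_conjTranspose, hUU]; simp
      rw [hq]
      have := abs_quadform_le n K (fun j => U j i) (fun j => U j i)
      rw [h1] at this
      simpa [Real.sqrt_one] using this
    have hWii : ∀ i, ‖(Wᴴ * K * W) i i‖ ≤ d i * hsNorm n K := by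
      intro i
      have hq := quad_entry W K i
      have h1 : ∑ j, ‖W j i‖ ^ 2 = d i := by
        refine col_norm_sum W i (d i) ?_
        rw [hWW]; simp [hdCdef]
      rw [hq]
      have := abs_quadform_le n K (fun j => W j i) (fun j => W j i)
      rw [h1, Real.mul_self_sqrt (hd i)] at this
      exact this
    have hBii : ∀ i, ‖B' i i‖ ≤ 2 * d i * hsNorm n K := by
      intro i
      have he : B' i i = dC i * ((star U * K * U) i i) - (Wᴴ * K * W) i i := by
        rw [hB'eq, Matrix.sub_apply, Matrix.diagonal_mul]
      rw [he]
      calc ‖dC i * ((star U * K * U) i i) - (Wᴴ * K * W) i i‖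
          ≤ ‖dC i * ((star U * K * U) i i)‖ +
            ‖(Wᴴ * K * W) i i‖ := by
            exact norm_sub_le _ _
        _ ≤ d i * hsNorm n K + d i * hsNorm n K := by
            refine add_le_add ?_ (hWii i)
            rw [norm_mul]
            have habs : ‖dC i‖ = d i := by
              rw [hdCdef, Complex.norm_real, Real.norm_eq_abs, abs_of_nonneg (hd i)]
            rw [habs]
            exact mul_le_mul_of_nonneg_left (hKii i) (hd i)
        _ = 2 * d i * hsNorm n K := by ring
    have h1 : ((-1 : ℂ) ^ (n - m)) * ((-1 : ℂ) ^ (n - m)) = 1 := by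
      rw [← pow_add]
      exact Even.neg_one_pow ⟨n - m, by ring⟩
    have hchar0 : (A : Matrix (Fin n) (Fin n) ℂ).charpoly = (diagonal dC).charpoly := by
      have := hsim 0; simpa using this
    set Sig : ℝ := ∑ S ∈ Finset.powersetCard (n - m) Finset.univ, ∏ j ∈ S, d j with hSig
    have hSig0 : 0 ≤ Sig :=
      Finset.sum_nonneg fun S _ => Finset.prod_nonneg fun j _ => hd j
    have hDmA : Dm n m A = ((Sig : ℝ) : ℂ) := by
      rw [Dm, hchar0, charpoly_diagonal]
      rw [prod_X_sub_C_coeff_fin Finset.univ dC (by simpa using hm)]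
      simp only [Finset.card_univ, Fintype.card_fin]
      rw [← mul_assoc, h1, one_mul, hSig]
      push_cast
      rfl
    have habsDm : ‖Dm n m A‖ = Sig := by
      rw [hDmA, Complex.norm_real, Real.norm_eq_abs, abs_of_nonneg hSig0]
    have hfinal : ‖T‖ ≤ 2 * (n : ℝ) * hsNorm n K * Sig := by
      calc ‖T‖
          ≤ ∑ S ∈ Finset.powersetCard (n - m) Finset.univ,
              ‖∑ i ∈ S, (∏ j ∈ S.erase i, dC j) * B' i i‖ := by
            rw [hTdef]; exact norm_sum_le _ _
        _ ≤ ∑ S ∈ Finset.powersetCard (n - m) Finset.univ,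
              ∑ i ∈ S, ‖(∏ j ∈ S.erase i, dC j) * B' i i‖ :=
            Finset.sum_le_sum fun S _ => norm_sum_le _ _
        _ = ∑ S ∈ Finset.powersetCard (n - m) Finset.univ,
              ∑ i ∈ S, (∏ j ∈ S.erase i, d j) * ‖B' i i‖ := by
            refine Finset.sum_congr rfl fun S _ => Finset.sum_congr rfl fun i _ => ?_
            rw [norm_mul, norm_prod]
            congr 1
            exact Finset.prod_congr rfl fun j _ => by
              rw [hdCdef, Complex.norm_real, Real.norm_eq_abs, abs_of_nonneg (hd j)]
        _ ≤ ∑ S ∈ Finset.powersetCard (n - m) Finset.univ,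
              ∑ i ∈ S, (∏ j ∈ S.erase i, d j) * (2 * d i * hsNorm n K) := by
            refine Finset.sum_le_sum fun S _ => Finset.sum_le_sum fun i _ => ?_
            exact mul_le_mul_of_nonneg_left (hBii i)
              (Finset.prod_nonneg fun j _ => hd j)
        _ = 2 * hsNorm n K * ∑ S ∈ Finset.powersetCard (n - m) Finset.univ,
              ∑ i ∈ S, ∏ j ∈ S, d j := by
            rw [Finset.mul_sum]
            refine Finset.sum_congr rfl fun S _ => ?_
            rw [Finset.mul_sum]
            refine Finset.sum_congr rfl fun i hi => ?_
            rw [← Finset.mul_prod_erase S d hi]; ring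
        _ = 2 * hsNorm n K * ∑ S ∈ Finset.powersetCard (n - m) Finset.univ,
              ((n - m : ℕ) : ℝ) * ∏ j ∈ S, d j := by
            congr 1
            refine Finset.sum_congr rfl fun S hS => ?_
            rw [Finset.sum_const, (Finset.mem_powersetCard.mp hS).2, nsmul_eq_mul]
        _ = 2 * hsNorm n K * (((n - m : ℕ) : ℝ) * Sig) := by
            rw [← Finset.mul_sum, hSig]
        _ ≤ 2 * hsNorm n K * ((n : ℝ) * Sig) := by
            have hnm : ((n - m : ℕ) : ℝ) ≤ (n : ℝ) := by
              exact_mod_cast Nat.sub_le n m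
            have := mul_le_mul_of_nonneg_right hnm hSig0
            nlinarith [hs0, hSig0]
        _ = 2 * (n : ℝ) * hsNorm n K * Sig := by ring
    rw [habsDm]
    exact hfinal
end

section
/- Let V be a finite-dimensional complex normed vector space and let π : ℝ → GL(V) be a group homomorphism from the additive group (ℝ,+) that is continuous as a map into End(V). Then there exists a unique α ∈ End(V) such that π(t) = exp(t·α) for all t ∈ ℝ. -/
set_option maxHeartbeats 1000000 in
theorem stmt_2 (V : Type*) [NormedAddCommGroup V] [NormedSpace ℂ V]
    [FiniteDimensional ℂ V]
    (π : ℝ → (V →L[ℂ] V)ˣ)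
    (hπ : ∀ s t : ℝ, π (s + t) = π s * π t)
    (hcont : Continuous fun t : ℝ => (π t : V →L[ℂ] V)) :
    ∃! α : V →L[ℂ] V, ∀ t : ℝ,
      (π t : V →L[ℂ] V) = NormedSpace.exp ((t : ℂ) • α) := by
  classical
  set E := V →L[ℂ] V with hE
  let +nondep : NormedAlgebra ℚ E := .restrictScalars ℚ ℂ E
  -- π 0 = 1
  have hπ0 : (π 0 : E) = 1 := by
    have h : π 0 * π 0 = π 0 * 1 := by rw [mul_one, ← hπ 0 0, add_zero]
    have h2 : π (0 : ℝ) = 1 := mul_left_cancel h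
    rw [h2, Units.val_one]
  -- powers
  have hpow : ∀ (n : ℕ) (s : ℝ), (π ((n : ℝ) * s) : E) = (π s : E) ^ n := by
    intro n s
    induction n with
    | zero => simpa using hπ0
    | succ n ih =>
      have harg : ((n + 1 : ℕ) : ℝ) * s = (n : ℝ) * s + s := by push_cast; ring
      rw [harg, hπ, Units.val_mul, ih, pow_succ]
  -- local inverse of exp at 0
  have hda : HasStrictFDerivAt (NormedSpace.exp)
      ((ContinuousLinearEquiv.refl ℂ E : E →L[ℂ] E)) 0 := by
    exact (hasStrictFDerivAt_exp_zero :
      HasStrictFDerivAt (NormedSpace.exp) (1 : E →L[ℂ] E) 0)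
  set g : E → E := hda.localInverse _ _ _ with hg
  have hleft : ∀ᶠ x in nhds (0 : E), g (NormedSpace.exp x) = x :=
    hda.eventually_left_inverse
  have hrightE : ∀ᶠ y in nhds (1 : E), NormedSpace.exp (g y) = y := by
    have := hda.eventually_right_inverse
    rwa [NormedSpace.exp_zero] at this
  obtain ⟨r, hr0, hrball⟩ := Metric.eventually_nhds_iff_ball.mp hleft
  have hinj : ∀ a b : E, ‖a‖ < r → ‖b‖ < r →
      NormedSpace.exp a = NormedSpace.exp b → a = b := by
    intro a b ha hb hab
    have h1 := hrball a (by simpa [Metric.mem_ball, dist_zero_right] using ha)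
    have h2 := hrball b (by simpa [Metric.mem_ball, dist_zero_right] using hb)
    rw [← h1, hab, h2]
  have hπt : Filter.Tendsto (fun t : ℝ => (π t : E)) (nhds 0) (nhds 1) := by
    simpa [hπ0] using (hcont.tendsto 0)
  have hgc : Filter.Tendsto (fun t : ℝ => g ((π t : E))) (nhds 0) (nhds 0) := by
    have hc := hda.localInverse_continuousAt
    rw [NormedSpace.exp_zero] at hc
    have h0 : g 1 = 0 := by
      have := hrball 0 (by simpa [Metric.mem_ball] using hr0)
      simpa [NormedSpace.exp_zero] using this
    have h2 : Filter.Tendsto (fun t : ℝ => g ((π t : E))) (nhds 0) (nhds (g 1)) :=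
      hc.tendsto.comp hπt
    rwa [h0] at h2
  have hb : ∀ᶠ x : E in nhds 0, ‖x‖ < r / 2 := by
    have hmem := Metric.ball_mem_nhds (0 : E) (by positivity : (0:ℝ) < r / 2)
    filter_upwards [hmem] with x hx
    simpa [Metric.mem_ball, dist_zero_right] using hx
  have hev : ∀ᶠ t : ℝ in nhds 0,
      NormedSpace.exp (g ((π t : E))) = (π t : E) ∧ ‖g ((π t : E))‖ < r / 2 := by
    filter_upwards [hπt.eventually hrightE, hgc.eventually hb] with t h1 h2
    exact ⟨h1, h2⟩
  obtain ⟨δ, hδ0, hδ⟩ := Metric.eventually_nhds_iff.mp hev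
  have key : ∀ t : ℝ, |t| < δ →
      NormedSpace.exp (g ((π t : E))) = (π t : E) ∧ ‖g ((π t : E))‖ < r / 2 := by
    intro t ht
    exact hδ (by simpa [Real.dist_eq] using ht)
  -- halving
  have fhalf : ∀ t : ℝ, |t| < δ → g ((π t : E)) = 2 • g ((π (t / 2) : E)) := by
    intro t ht
    have ht2 : |t / 2| < δ := by
      rw [abs_div]
      have := abs_nonneg t
      simp only [abs_two]
      linarith
    obtain ⟨he, hn⟩ := key t ht
    obtain ⟨he2, hn2⟩ := key (t / 2) ht2
    apply hinj
    · linarith [norm_nonneg (g ((π t : E)))]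
    · calc ‖(2 : ℕ) • g ((π (t/2) : E))‖ = ‖g ((π (t/2) : E)) + g ((π (t/2) : E))‖ := by
            rw [two_smul]
        _ ≤ ‖g ((π (t/2) : E))‖ + ‖g ((π (t/2) : E))‖ := norm_add_le _ _
        _ < r := by linarith
    · rw [he, NormedSpace.exp_nsmul, he2, pow_two, ← Units.val_mul, ← hπ]
      norm_num
  set c : ℝ := δ / 2 with hc
  have hc0 : 0 < c := by positivity
  have hcsmall : ∀ n : ℕ, |c / 2 ^ n| < δ := by
    intro n
    have h1 : (1 : ℝ) ≤ 2 ^ n := one_le_pow₀ (by norm_num)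
    rw [abs_of_pos (by positivity)]
    have h2 : c / 2 ^ n ≤ c := div_le_self (le_of_lt hc0) h1
    have hcδ : c < δ := by rw [hc]; linarith
    linarith
  have hcn : ∀ n : ℕ, g ((π c : E)) = (2 ^ n : ℕ) • g ((π (c / 2 ^ n) : E)) := by
    intro n
    induction n with
    | zero => simp
    | succ n ih =>
      rw [ih, fhalf (c / 2 ^ n) (hcsmall n)]
      have harg : c / 2 ^ n / 2 = c / 2 ^ (n + 1) := by ring
      rw [harg, smul_smul, pow_succ (2 : ℕ) n]
  set α₀ : E := c⁻¹ • g ((π c : E)) with hα₀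
  -- dyadic identity
  have hdy : ∀ (n k : ℕ),
      (π ((k : ℝ) * (c / 2 ^ n)) : E) =
        NormedSpace.exp (((k : ℝ) * (c / 2 ^ n)) • α₀) := by
    intro n k
    have hsm : ((k : ℝ) * (c / 2 ^ n)) • α₀ = (k : ℕ) • g ((π (c / 2 ^ n) : E)) := by
      have hcne : c ≠ 0 := ne_of_gt hc0
      have h2ne : (2 : ℝ) ^ n ≠ 0 := by positivity
      rw [hα₀, smul_smul, hcn n, ← Nat.cast_smul_eq_nsmul ℝ, ← Nat.cast_smul_eq_nsmul ℝ,
        smul_smul]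
      congr 1
      push_cast
      field_simp
    rw [hsm, NormedSpace.exp_nsmul, (key _ (hcsmall n)).1, ← hpow]
  -- nonnegative t
  have hpos : ∀ t : ℝ, 0 ≤ t → (π t : E) = NormedSpace.exp (t • α₀) := by
    intro t ht
    set u : ℕ → ℝ := fun n => ((⌊t * 2 ^ n / c⌋₊ : ℝ)) * (c / 2 ^ n) with hu
    have hulb : ∀ n, t - c / 2 ^ n < u n := by
      intro n
      simp only [hu]
      have h2n : (0:ℝ) < 2 ^ n := by positivity
      have hx : t * 2 ^ n / c < (⌊t * 2 ^ n / c⌋₊ : ℝ) + 1 := Nat.lt_floor_add_one _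
      rw [div_lt_iff₀ hc0] at hx
      have key2 : (t - c / 2 ^ n) * 2 ^ n < (⌊t * 2 ^ n / c⌋₊ : ℝ) * (c / 2 ^ n) * 2 ^ n := by
        have e1 : (t - c / 2 ^ n) * 2 ^ n = t * 2 ^ n - c := by field_simp
        have e2 : (⌊t * 2 ^ n / c⌋₊ : ℝ) * (c / 2 ^ n) * 2 ^ n
            = (⌊t * 2 ^ n / c⌋₊ : ℝ) * c := by field_simp
        rw [e1, e2]
        linarith
      exact lt_of_mul_lt_mul_right key2 (le_of_lt h2n)
    have huub : ∀ n, u n ≤ t := by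
      intro n
      simp only [hu]
      have h2n : (0:ℝ) < 2 ^ n := by positivity
      calc (⌊t * 2 ^ n / c⌋₊ : ℝ) * (c / 2 ^ n) ≤ (t * 2 ^ n / c) * (c / 2 ^ n) := by
            apply mul_le_mul_of_nonneg_right (Nat.floor_le (by positivity)) (by positivity)
        _ = t := by field_simp
    have hlim : Filter.Tendsto u Filter.atTop (nhds t) := by
      have h0 : Filter.Tendsto (fun n : ℕ => c / 2 ^ n) Filter.atTop (nhds 0) := by
        have : Filter.Tendsto (fun n : ℕ => ((1:ℝ)/2) ^ n) Filter.atTop (nhds 0) :=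
          tendsto_pow_atTop_nhds_zero_of_lt_one (by norm_num) (by norm_num)
        have heq : (fun n : ℕ => c / 2 ^ n) = fun n => c * ((1:ℝ)/2) ^ n := by
          funext n; rw [div_pow]; ring
        rw [heq]
        simpa using this.const_mul c
      have hlow : Filter.Tendsto (fun n : ℕ => t - c / 2 ^ n) Filter.atTop (nhds t) := by
        simpa using (tendsto_const_nhds (x := t) (f := Filter.atTop)).sub h0
      exact tendsto_of_tendsto_of_tendsto_of_le_of_le hlow tendsto_const_nhds
        (fun n => le_of_lt (hulb n)) huub
    have h1 : Filter.Tendsto (fun n => (π (u n) : E)) Filter.atTop (nhds (π t : E)) :=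
      (hcont.tendsto t).comp hlim
    have h2 : Filter.Tendsto (fun n => NormedSpace.exp (u n • α₀)) Filter.atTop
        (nhds (NormedSpace.exp (t • α₀))) :=
      (NormedSpace.exp_continuous.tendsto _).comp (hlim.smul_const α₀)
    have heq : ∀ n, (π (u n) : E) = NormedSpace.exp (u n • α₀) := fun n => hdy n _
    exact tendsto_nhds_unique ((Filter.tendsto_congr heq).mp h1) h2
  -- all t
  have hall : ∀ t : ℝ, (π t : E) = NormedSpace.exp (t • α₀) := by
    intro t
    rcases le_or_gt 0 t with h | h
    · exact hpos t h
    · have hnt := hpos (-t) (by linarith)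
      have h1 : (π t : E) * (π (-t) : E) = 1 := by
        rw [← Units.val_mul, ← hπ]
        simp [hπ0]
      have hcomm : Commute ((-t) • α₀) (t • α₀) :=
        ((Commute.refl α₀).smul_left (-t)).smul_right t
      have h2 : NormedSpace.exp ((-t) • α₀) * NormedSpace.exp (t • α₀) = 1 := by
        rw [← NormedSpace.exp_add_of_commute hcomm, ← add_smul, neg_add_cancel, zero_smul,
          NormedSpace.exp_zero]
      calc (π t : E) = (π t : E) * (NormedSpace.exp ((-t) • α₀) * NormedSpace.exp (t • α₀)) := by
            rw [h2, mul_one]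
        _ = ((π t : E) * (π (-t) : E)) * NormedSpace.exp (t • α₀) := by
            rw [hnt, mul_assoc]
        _ = NormedSpace.exp (t • α₀) := by rw [h1, one_mul]
  refine ⟨α₀, fun t => ?_, fun β hβ => ?_⟩
  · rw [Complex.coe_smul]; exact hall t
  · -- uniqueness
    have hβ' : ∀ t : ℝ, NormedSpace.exp (t • β) = NormedSpace.exp (t • α₀) := by
      intro t
      rw [← Complex.coe_smul, ← hβ t, hall t]
    set t0 : ℝ := min (r / (2 * (‖β‖ + 1))) (r / (2 * (‖α₀‖ + 1))) with ht0def
    have ht0 : 0 < t0 := by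
      apply lt_min <;> positivity
    have hb1 : ‖t0 • β‖ < r := by
      rw [norm_smul t0 β, Real.norm_eq_abs, abs_of_pos ht0]
      have h1 : t0 ≤ r / (2 * (‖β‖ + 1)) := min_le_left _ _
      have h2 : (0:ℝ) < ‖β‖ + 1 := by positivity
      calc t0 * ‖β‖ ≤ t0 * (‖β‖ + 1) := by nlinarith
        _ ≤ (r / (2 * (‖β‖ + 1))) * (‖β‖ + 1) := by nlinarith
        _ = r / 2 := by field_simp
        _ < r := by linarith
    have hb2 : ‖t0 • α₀‖ < r := by
      rw [norm_smul t0 α₀, Real.norm_eq_abs, abs_of_pos ht0]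
      have h1 : t0 ≤ r / (2 * (‖α₀‖ + 1)) := min_le_right _ _
      have h2 : (0:ℝ) < ‖α₀‖ + 1 := by positivity
      calc t0 * ‖α₀‖ ≤ t0 * (‖α₀‖ + 1) := by nlinarith
        _ ≤ (r / (2 * (‖α₀‖ + 1))) * (‖α₀‖ + 1) := by nlinarith
        _ = r / 2 := by field_simp
        _ < r := by linarith
    have := hinj _ _ hb1 hb2 (hβ' t0)
    exact smul_right_injective E (ne_of_gt ht0) this
end

section
/- Let G be a dense additive subgroup of ℝ (with the subspace topology), let V be a finite-dimensional complex normed vector space, and let π : G → GL(V) be a continuous group homomorphism. Then there exists α ∈ End(V) such that π(g) = exp(g·α) for all g ∈ G. -/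
open NormedSpace Filter Topology MeasureTheory intervalIntegral

set_option maxHeartbeats 1000000 in
theorem stmt_3 (G : AddSubgroup ℝ) (hG : Dense (G : Set ℝ))
    (V : Type*) [NormedAddCommGroup V] [NormedSpace ℂ V] [FiniteDimensional ℂ V]
    (π : G → (V →L[ℂ] V)ˣ)
    (hπ : ∀ g h : G, π (g + h) = π g * π h)
    (hcont : Continuous fun g : G => (π g : V →L[ℂ] V)) :
    ∃ α : V →L[ℂ] V, ∀ g : G,
      (π g : V →L[ℂ] V) = NormedSpace.exp (((g : ℝ) : ℂ) • α) := by
  set p : G → (V →L[ℂ] V) := fun g => (π g : V →L[ℂ] V) with hp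
  have hpmul : ∀ g h : G, p (g + h) = p g * p h := fun g h => by
    simp only [hp, hπ g h, Units.val_mul]
  have hp0 : p 0 = 1 := by
    have h := hπ 0 0
    rw [add_zero] at h
    have h1 : π 0 = 1 := mul_right_cancel (a := π 0) (b := π 0) (c := 1) (by rw [one_mul, ← h])
    simp [hp, h1]
  -- continuity at zero
  have cont0 : ∀ ε > (0:ℝ), ∃ δ > (0:ℝ), ∀ g : G, |(g:ℝ)| < δ → ‖p g - 1‖ < ε := by
    intro ε hε
    have h := hcont.continuousAt (x := (0 : G))
    rw [Metric.continuousAt_iff] at h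
    obtain ⟨δ, hδ, h⟩ := h ε hε
    refine ⟨δ, hδ, fun g hg => ?_⟩
    have : dist g 0 < δ := by
      rw [Subtype.dist_eq, Real.dist_eq]
      simpa using hg
    have := h this
    rwa [hp0, dist_eq_norm] at this
  -- dense inducing
  have di : IsDenseInducing ((↑·) : G → ℝ) := ⟨IsInducing.subtypeVal, hG.denseRange_val⟩
  -- limits exist
  have key : ∀ t : ℝ, ∃ c : V →L[ℂ] V, Tendsto p (Filter.comap ((↑·) : G → ℝ) (𝓝 t)) (𝓝 c) := by
    intro t
    set F := Filter.comap ((↑·) : G → ℝ) (𝓝 t) with hF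
    have hne : F.NeBot := di.comap_nhds_neBot t
    obtain ⟨δ₁, hδ₁, hb⟩ := cont0 1 one_pos
    obtain ⟨a, ha, hat⟩ : ∃ a ∈ (G : Set ℝ), dist t a < δ₁ / 2 := by
      have := Metric.mem_closure_iff.mp (hG t) (δ₁ / 2) (by positivity)
      simpa using this
    set g₀ : G := ⟨a, ha⟩ with hg₀
    set M : ℝ := 2 * ‖p g₀‖ + 1 with hM
    have hMpos : 0 < M := by positivity
    have hbound : ∀ g : G, |(g:ℝ) - t| < δ₁ / 2 → ‖p g‖ ≤ M := by
      intro g hg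
      have hsmall : |((g - g₀ : G) : ℝ)| < δ₁ := by
        push_cast
        have : |(g:ℝ) - a| ≤ |(g:ℝ) - t| + |t - a| := by
          have := abs_sub_abs_le_abs_sub ((g:ℝ) - t) (a - t)
          calc |(g:ℝ) - a| = |((g:ℝ) - t) - (a - t)| := by ring_nf
            _ ≤ |(g:ℝ) - t| + |a - t| := abs_sub _ _
            _ = |(g:ℝ) - t| + |t - a| := by rw [abs_sub_comm a t]
        calc |(g:ℝ) - a| ≤ |(g:ℝ) - t| + |t - a| := this
          _ < δ₁ / 2 + δ₁ / 2 := by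
              have := hat; rw [Real.dist_eq] at this; exact add_lt_add hg this
          _ = δ₁ := by ring
      have h2 : ‖p (g - g₀)‖ ≤ 2 := by
        calc ‖p (g - g₀)‖ = ‖(p (g - g₀) - 1) + 1‖ := by rw [sub_add_cancel]
          _ ≤ ‖p (g - g₀) - 1‖ + ‖(1 : V →L[ℂ] V)‖ := norm_add_le _ _
          _ ≤ 1 + 1 := add_le_add (le_of_lt (hb _ hsmall))
              (by rw [ContinuousLinearMap.one_def]; exact ContinuousLinearMap.norm_id_le)
          _ = 2 := by norm_num
      have : p g = p (g - g₀) * p g₀ := by rw [← hpmul, sub_add_cancel]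
      calc ‖p g‖ = ‖p (g - g₀) * p g₀‖ := by rw [this]
        _ ≤ ‖p (g - g₀)‖ * ‖p g₀‖ := norm_mul_le _ _
        _ ≤ 2 * ‖p g₀‖ := mul_le_mul_of_nonneg_right h2 (norm_nonneg _)
        _ ≤ M := by rw [hM]; linarith
    have hcauchy : Cauchy (F.map p) := by
      rw [Metric.cauchy_iff]
      refine ⟨hne.map _, fun ε hε => ?_⟩
      obtain ⟨δ₂, hδ₂, h2⟩ := cont0 (ε / M) (by positivity)
      set r : ℝ := min (δ₁ / 2) (δ₂ / 2) with hr
      have hrpos : 0 < r := by positivity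
      set S : Set G := ((↑·) : G → ℝ) ⁻¹' Metric.ball t r with hS
      refine ⟨p '' S, image_mem_map (preimage_mem_comap (Metric.ball_mem_nhds t hrpos)), ?_⟩
      rintro x ⟨g, hgS, rfl⟩ y ⟨h, hhS, rfl⟩
      have hg : |(g:ℝ) - t| < r := by
        have := hgS; rw [hS, Set.mem_preimage, Metric.mem_ball, Real.dist_eq] at this; exact this
      have hh : |(h:ℝ) - t| < r := by
        have := hhS; rw [hS, Set.mem_preimage, Metric.mem_ball, Real.dist_eq] at this; exact this
      have hgh : |((g - h : G) : ℝ)| < δ₂ := by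
        push_cast
        calc |(g:ℝ) - h| = |((g:ℝ) - t) - ((h:ℝ) - t)| := by ring_nf
          _ ≤ |(g:ℝ) - t| + |(h:ℝ) - t| := abs_sub _ _
          _ < r + r := add_lt_add hg hh
          _ ≤ δ₂ / 2 + δ₂ / 2 := add_le_add (min_le_right _ _) (min_le_right _ _)
          _ = δ₂ := by ring
      have hhM : ‖p h‖ ≤ M := hbound h (lt_of_lt_of_le hh (min_le_left _ _))
      have heq : p g - p h = (p (g - h) - 1) * p h := by
        rw [sub_mul, one_mul, ← hpmul, sub_add_cancel]
      rw [dist_eq_norm, heq]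
      calc ‖(p (g - h) - 1) * p h‖ ≤ ‖p (g - h) - 1‖ * ‖p h‖ := norm_mul_le _ _
        _ ≤ ‖p (g - h) - 1‖ * M := mul_le_mul_of_nonneg_left hhM (norm_nonneg _)
        _ < (ε / M) * M := by
            apply mul_lt_mul_of_pos_right (h2 _ hgh) hMpos
        _ = ε := by field_simp
    obtain ⟨x, hx⟩ := CompleteSpace.complete hcauchy
    exact ⟨x, hx⟩
  set ψ : ℝ → (V →L[ℂ] V) := di.extend p with hψ
  have hψcont : Continuous ψ := di.continuous_extend key
  have hψe : ∀ g : G, ψ g = p g := fun g => di.extend_eq hcont g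
  have hψ0 : ψ 0 = 1 := by
    have : ((0 : G) : ℝ) = (0 : ℝ) := rfl
    rw [← this, hψe, hp0]
  have hψmul : ∀ s t : ℝ, ψ (s + t) = ψ s * ψ t := by
    have heq : (fun q : ℝ × ℝ => ψ (q.1 + q.2)) = fun q : ℝ × ℝ => ψ q.1 * ψ q.2 := by
      apply Continuous.ext_on (hG.prod hG)
      · exact hψcont.comp (continuous_fst.add continuous_snd)
      · exact (hψcont.comp continuous_fst).mul (hψcont.comp continuous_snd)
      · rintro ⟨a, b⟩ ⟨ha, hb⟩
        have h1 : a + b = ((⟨a, ha⟩ + ⟨b, hb⟩ : G) : ℝ) := rfl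
        have h2 : a = ((⟨a, ha⟩ : G) : ℝ) := rfl
        have h3 : b = ((⟨b, hb⟩ : G) : ℝ) := rfl
        simp only
        rw [h1, hψe, hpmul]
        exact (congrArg₂ (· * ·) (hψe ⟨a, ha⟩) (hψe ⟨b, hb⟩)).symm
    intro s t
    exact congrFun heq (s, t)
  -- small interval bound for ψ near 0
  obtain ⟨δ, hδ, hsm⟩ : ∃ δ > (0:ℝ), ∀ s : ℝ, |s| < δ → ‖ψ s - 1‖ ≤ 1/2 := by
    have h := hψcont.continuousAt (x := (0:ℝ))
    rw [Metric.continuousAt_iff] at h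
    obtain ⟨δ, hδ, h⟩ := h (1/2) (by norm_num)
    refine ⟨δ, hδ, fun s hs => ?_⟩
    have h1 : dist s 0 < δ := by rwa [Real.dist_eq, sub_zero]
    have := h h1
    rw [hψ0, dist_eq_norm] at this
    exact this.le
  set c : ℝ := δ / 2 with hc
  have hcpos : 0 < c := by positivity
  have hint : ∀ a b : ℝ, IntervalIntegrable ψ volume a b := fun a b =>
    hψcont.intervalIntegrable a b
  set B : V →L[ℂ] V := ∫ s in (0:ℝ)..c, ψ s with hB
  have hend : ‖(1 : V →L[ℂ] V) - c⁻¹ • B‖ < 1 := by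
    have h1 : B - c • (1 : V →L[ℂ] V) = ∫ s in (0:ℝ)..c, (ψ s - 1) := by
      rw [intervalIntegral.integral_sub (hint 0 c) intervalIntegrable_const,
        intervalIntegral.integral_const]
      simp
      exact hB
    have h2 : ‖B - c • (1 : V →L[ℂ] V)‖ ≤ (1/2) * |c - 0| := by
      rw [h1]
      apply intervalIntegral.norm_integral_le_of_norm_le_const
      intro s hs
      rw [Set.uIoc_of_le hcpos.le] at hs
      apply hsm
      rw [abs_of_pos hs.1]
      calc s ≤ c := hs.2
        _ < δ := by rw [hc]; linarith
    have h3 : (1 : V →L[ℂ] V) - c⁻¹ • B = c⁻¹ • (c • (1 : V →L[ℂ] V) - B) := by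
      rw [smul_sub, smul_smul, inv_mul_cancel₀ hcpos.ne', one_smul]
    rw [h3]
    have hns : ‖c⁻¹ • (c • (1 : V →L[ℂ] V) - B)‖ = ‖(c⁻¹ : ℝ)‖ * ‖c • (1 : V →L[ℂ] V) - B‖ :=
      norm_smul (c⁻¹) (c • (1 : V →L[ℂ] V) - B)
    have hnc : ‖(c⁻¹ : ℝ)‖ = c⁻¹ := by
      rw [Real.norm_eq_abs, abs_of_pos (by positivity)]
    calc ‖c⁻¹ • (c • (1 : V →L[ℂ] V) - B)‖ = ‖(c⁻¹ : ℝ)‖ * ‖c • (1 : V →L[ℂ] V) - B‖ := hns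
      _ = c⁻¹ * ‖B - c • (1 : V →L[ℂ] V)‖ := by rw [hnc, norm_sub_rev]
      _ ≤ c⁻¹ * ((1/2) * |c - 0|) := mul_le_mul_of_nonneg_left h2 (by positivity)
      _ = 1/2 := by rw [sub_zero, abs_of_pos hcpos]; field_simp
      _ < 1 := by norm_num
  set w : (V →L[ℂ] V)ˣ := Units.oneSub ((1 : V →L[ℂ] V) - c⁻¹ • B) hend with hw
  have hwv : (w : V →L[ℂ] V) = c⁻¹ • B := by
    show (1 : V →L[ℂ] V) - ((1 : V →L[ℂ] V) - c⁻¹ • B) = c⁻¹ • B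
    abel
  set C : V →L[ℂ] V := c⁻¹ • ((w⁻¹ : (V →L[ℂ] V)ˣ) : V →L[ℂ] V) with hC
  have hBC : B * C = 1 := by
    have hBw : B = c • (w : V →L[ℂ] V) := by
      rw [hwv, smul_smul, mul_inv_cancel₀ hcpos.ne', one_smul]
    rw [hBw, hC, smul_mul_smul_comm, mul_inv_cancel₀ hcpos.ne', ← Units.val_mul,
      mul_inv_cancel, one_smul, Units.val_one]
  have htrans : ∀ t : ℝ, ψ t * B = ∫ s in t..(t + c), ψ s := by
    intro t
    have h1 : ψ t * B = ∫ s in (0:ℝ)..c, ψ t * ψ s := by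
      have := (ContinuousLinearMap.mul ℂ (V →L[ℂ] V) (ψ t)).intervalIntegral_comp_comm
        (hint 0 c)
      exact this.symm
    have h2 : (∫ s in (0:ℝ)..c, ψ t * ψ s) = ∫ s in (0:ℝ)..c, ψ (t + s) := by
      apply intervalIntegral.integral_congr
      intro s _
      exact (hψmul t s).symm
    rw [h1, h2, intervalIntegral.integral_comp_add_left ψ t, add_zero]
  have hrep : ∀ t : ℝ, ψ t = (∫ s in t..(t + c), ψ s) * C := by
    intro t
    rw [← htrans, mul_assoc, hBC, mul_one]
  set α : V →L[ℂ] V := (ψ c - 1) * C with hα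
  have hderiv : ∀ t : ℝ, HasDerivAt ψ (ψ t * α) t := by
    intro t
    have h1 : ∀ u : ℝ, HasDerivAt (fun x : ℝ => ∫ s in (0:ℝ)..x, ψ s) (ψ u) u := fun u =>
      (hψcont.integral_hasStrictDerivAt 0 u).hasDerivAt
    have h2 : HasDerivAt (fun x : ℝ => ∫ s in (0:ℝ)..(x + c), ψ s) (ψ (t + c)) t := by
      have := HasDerivAt.scomp t (h1 (t + c)) ((hasDerivAt_id t).add_const c)
      simpa [Function.comp_def] using this
    have h3 : HasDerivAt (fun x : ℝ => ∫ s in x..(x + c), ψ s) (ψ (t + c) - ψ t) t := by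
      have heq : ∀ x : ℝ, (∫ s in (0:ℝ)..(x + c), ψ s) - (∫ s in (0:ℝ)..x, ψ s)
          = ∫ s in x..(x + c), ψ s := fun x =>
        intervalIntegral.integral_interval_sub_left (hint 0 (x + c)) (hint 0 x)
      exact (h2.sub (h1 t)).congr_of_eventuallyEq (Eventually.of_forall fun x => (heq x).symm)
    have h5 : HasDerivAt ψ ((ψ (t + c) - ψ t) * C) t :=
      (h3.mul_const C).congr_of_eventuallyEq (Eventually.of_forall fun x => hrep x)
    have heq2 : (ψ (t + c) - ψ t) * C = ψ t * α := by
      rw [hψmul, hα, ← mul_assoc, mul_sub, mul_one]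
    rwa [heq2] at h5
  have hexpd : ∀ t : ℝ, HasDerivAt (fun u : ℝ => NormedSpace.exp (u • (-α)))
      ((-α) * NormedSpace.exp (t • (-α))) t :=
    fun t => hasDerivAt_exp_smul_const' (𝕂 := ℝ) (-α) t
  set Φ : ℝ → V →L[ℂ] V := fun t => ψ t * NormedSpace.exp (t • (-α)) with hΦ
  have hΦd : ∀ t : ℝ, HasDerivAt Φ 0 t := by
    intro t
    have h := (hderiv t).mul (hexpd t)
    convert h using 1
    · rfl
    · rfl
    · rfl
    · rfl
    rw [neg_mul, mul_neg, mul_assoc]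
    abel
  have hconst : ∀ t : ℝ, Φ t = Φ 0 := fun t =>
    is_const_of_deriv_eq_zero (fun x => (hΦd x).differentiableAt)
      (fun x => (hΦd x).deriv) t 0
  have hΦ0 : Φ 0 = 1 := by
    show ψ 0 * NormedSpace.exp ((0:ℝ) • (-α)) = 1
    rw [hψ0, zero_smul, NormedSpace.exp_zero, one_mul]
  have hfinal : ∀ t : ℝ, ψ t = NormedSpace.exp (t • α) := by
    intro t
    have h1 : ψ t * NormedSpace.exp (t • (-α)) = 1 := by
      rw [← hΦ0]; exact hconst t
    have hcomm : Commute (t • (-α)) (t • α) :=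
      (((Commute.refl α).neg_left).smul_left t).smul_right t
    have h2 : NormedSpace.exp (t • (-α)) * NormedSpace.exp (t • α) = 1 := by
      letI : NormedAlgebra ℚ (V →L[ℂ] V) := NormedAlgebra.restrictScalars ℚ ℝ _
      rw [← NormedSpace.exp_add_of_commute hcomm, smul_neg, neg_add_cancel,
        NormedSpace.exp_zero]
    calc ψ t = ψ t * (NormedSpace.exp (t • (-α)) * NormedSpace.exp (t • α)) := by
          rw [h2, mul_one]
      _ = (ψ t * NormedSpace.exp (t • (-α))) * NormedSpace.exp (t • α) := by
          rw [mul_assoc]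
      _ = NormedSpace.exp (t • α) := by rw [h1, one_mul]
  have hans : ∀ g : G, (π g : V →L[ℂ] V) = NormedSpace.exp (((g : ℝ) : ℂ) • α) := by
    intro g
    have hg : p g = NormedSpace.exp ((g : ℝ) • α) := by
      rw [← hψe g]; exact hfinal _
    calc (π g : V →L[ℂ] V) = NormedSpace.exp ((g : ℝ) • α) := hg
      _ = NormedSpace.exp ((g : ℝ) • α) := by
          rfl
      _ = NormedSpace.exp (((g : ℝ) : ℂ) • α) := by rw [Complex.coe_smul]
  exact ⟨α, hans⟩
end

section
/- Let G be a dense additive subgroup of ℝ (with the subspace topology), let V be a finite-dimensional complex normed vector space, and let π : G → GL(V) be a continuous group homomorphism. Then there exists a continuous group homomorphism π̄ : ℝ → GL(V) such that π̄(g) = π(g) for all g ∈ G. -/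
open Filter Topology

theorem stmt_4 (G : AddSubgroup ℝ) (hG : Dense (G : Set ℝ))
    (V : Type*) [NormedAddCommGroup V] [NormedSpace ℂ V] [FiniteDimensional ℂ V]
    (π : G → (V →L[ℂ] V)ˣ)
    (hπ : ∀ g h : G, π (g + h) = π g * π h)
    (hcont : Continuous fun g : G => (π g : V →L[ℂ] V)) :
    ∃ πb : ℝ → (V →L[ℂ] V)ˣ,
      (∀ s t : ℝ, πb (s + t) = πb s * πb t) ∧
      (Continuous fun t : ℝ => (πb t : V →L[ℂ] V)) ∧
      ∀ g : G, πb (g : ℝ) = π g := by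
  have hone : π 0 = 1 := by
    have := hπ 0 0
    rw [add_zero] at this
    exact (left_eq_mul.mp this)
  have hneg : ∀ g : G, π (-g) = (π g)⁻¹ := by
    intro g
    have := hπ g (-g)
    rw [add_neg_cancel, hone] at this
    exact eq_inv_of_mul_eq_one_right this.symm
  have hnpow : ∀ (n : ℕ) (g : G), π (n • g) = π g ^ n := by
    intro n g
    induction n with
    | zero => simpa using hone
    | succ n ih => rw [succ_nsmul, hπ, ih, pow_succ]
  have hzpow : ∀ (k : ℤ) (g : G), π (k • g) = π g ^ k := by
    intro k g
    cases k with
    | ofNat n => simpa using hnpow n g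
    | negSucc n =>
        rw [Int.negSucc_eq, ← Nat.cast_succ, neg_smul, hneg, natCast_zsmul, hnpow, zpow_neg,
          zpow_natCast]
  -- continuity at 0
  have hδ : ∀ ε > (0:ℝ), ∃ δ > (0:ℝ), ∀ g : G, |(g:ℝ)| < δ →
      ‖(π g : V →L[ℂ] V) - 1‖ < ε := by
    intro ε hε
    have h0 := (Metric.continuous_iff.mp hcont) 0 ε hε
    obtain ⟨δ, hδpos, hd⟩ := h0
    refine ⟨δ, hδpos, fun g hg => ?_⟩
    have : dist g 0 < δ := by
      rw [Subtype.dist_eq]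
      simpa using hg
    have := hd g this
    rw [dist_eq_norm] at this
    simpa [hone] using this
  -- local boundedness
  have hbound : ∀ T : ℝ, ∃ C > (0:ℝ), ∀ g : G, |(g:ℝ)| ≤ T →
      ‖(π g : V →L[ℂ] V)‖ ≤ C := by
    intro T
    obtain ⟨δ, hδpos, hd⟩ := hδ 1 one_pos
    obtain ⟨g₀, hg₀G, hg₀⟩ := hG.exists_mem_open isOpen_Ioo (Set.nonempty_Ioo.mpr hδpos)
    obtain ⟨hg₀pos, hg₀lt⟩ := hg₀
    set a : G := ⟨g₀, hg₀G⟩ with ha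
    set u := π a with hu
    set M : ℝ := max (max ‖(u : V →L[ℂ] V)‖ ‖((u⁻¹ : (V →L[ℂ] V)ˣ) : V →L[ℂ] V)‖) 1 with hM
    have hM1 : (1:ℝ) ≤ M := le_max_right _ _
    have hpn : ∀ (n : ℕ) (v : (V →L[ℂ] V)ˣ), ‖(v : V →L[ℂ] V)‖ ≤ M →
        ‖((v ^ n : (V →L[ℂ] V)ˣ) : V →L[ℂ] V)‖ ≤ M ^ n := by
      intro n v hv
      induction n with
      | zero =>
          have h1 : ‖(1 : V →L[ℂ] V)‖ ≤ 1 := ContinuousLinearMap.norm_id_le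
          simpa using h1
      | succ n ih =>
          rw [pow_succ, Units.val_mul, pow_succ]
          exact le_trans (norm_mul_le _ _)
            (mul_le_mul ih hv (norm_nonneg _) (by positivity))
    have hpz : ∀ k : ℤ, ‖((u ^ k : (V →L[ℂ] V)ˣ) : V →L[ℂ] V)‖ ≤ M ^ k.natAbs := by
      intro k
      cases k with
      | ofNat n => simpa using hpn n u (le_trans (le_max_left _ _) (le_max_left _ _))
      | negSucc n =>
          rw [zpow_negSucc, ← inv_pow]
          simpa using hpn (n+1) u⁻¹ (le_trans (le_max_right _ _) (le_max_left _ _))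
    set N : ℕ := ⌈(T + δ) / g₀⌉₊ with hN
    refine ⟨M ^ N * 2, by positivity, fun g hg => ?_⟩
    set k : ℤ := ⌊(g : ℝ) / g₀⌋ with hk
    set r : G := g - k • a with hr
    have hrval : (r : ℝ) = (g : ℝ) - k * g₀ := by
      rw [hr]
      push_cast [zsmul_eq_mul]
      ring
    have hr0 : 0 ≤ (r : ℝ) := by
      rw [hrval]; exact Int.sub_floor_div_mul_nonneg (g:ℝ) hg₀pos
    have hr1 : (r : ℝ) < g₀ := by
      rw [hrval]; exact Int.sub_floor_div_mul_lt (g:ℝ) hg₀pos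
    have hrδ : |(r : ℝ)| < δ := by
      rw [abs_of_nonneg hr0]; linarith
    have hrn : ‖(π r : V →L[ℂ] V)‖ ≤ 2 := by
      have h1 := hd r hrδ
      calc ‖(π r : V →L[ℂ] V)‖ ≤ ‖(π r : V →L[ℂ] V) - 1‖ + ‖(1 : V →L[ℂ] V)‖ := by
            simpa using norm_add_le ((π r : V →L[ℂ] V) - 1) 1
        _ ≤ 1 + 1 := by
            have : ‖(1 : V →L[ℂ] V)‖ ≤ 1 := ContinuousLinearMap.norm_id_le
            linarith
        _ = 2 := by norm_num
    have hdecomp : g = k • a + r := by rw [hr]; abel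
    have hkN : k.natAbs ≤ N := by
      have h1 : |(k:ℝ)| * g₀ ≤ T + δ := by
        have : |(k:ℝ) * g₀| = |(g:ℝ) - (r:ℝ)| := by rw [hrval]; ring_nf
        have h2 : |(k:ℝ) * g₀| ≤ |(g:ℝ)| + |(r:ℝ)| := by
          rw [this]; exact abs_sub _ _
        rw [abs_mul, abs_of_pos hg₀pos] at h2
        have := abs_of_nonneg hr0
        nlinarith
      have h3 : (k.natAbs : ℝ) ≤ (T + δ) / g₀ := by
        rw [le_div_iff₀ hg₀pos]
        calc (k.natAbs : ℝ) * g₀ = |(k:ℝ)| * g₀ := by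
              rw [Nat.cast_natAbs]
              push_cast
              ring
          _ ≤ T + δ := h1
      have h4 : (k.natAbs : ℝ) ≤ (N : ℝ) := le_trans h3 (Nat.le_ceil _)
      exact_mod_cast h4
    calc ‖(π g : V →L[ℂ] V)‖
        = ‖((u ^ k : (V →L[ℂ] V)ˣ) : V →L[ℂ] V) * (π r : V →L[ℂ] V)‖ := by
          rw [hdecomp, hπ, hzpow, Units.val_mul]
      _ ≤ M ^ k.natAbs * 2 := le_trans (norm_mul_le _ _)
          (mul_le_mul (hpz k) hrn (norm_nonneg _) (by positivity))
      _ ≤ M ^ N * 2 := by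
          have := pow_le_pow_right₀ hM1 hkN
          nlinarith
  -- local uniform continuity
  have hL : ∀ x : ℝ, ∀ ε > (0:ℝ), ∃ η > (0:ℝ), ∀ g h : G,
      |(g:ℝ) - x| < η → |(h:ℝ) - x| < η →
      ‖(π g : V →L[ℂ] V) - (π h : V →L[ℂ] V)‖ < ε := by
    intro x ε hε
    obtain ⟨C, hCpos, hC⟩ := hbound (|x| + 1)
    obtain ⟨δ, hδpos, hd⟩ := hδ (ε / C) (by positivity)
    refine ⟨min (δ / 2) 1, by positivity, fun g h hgx hhx => ?_⟩
    have hgh : |(g:ℝ) - (h:ℝ)| < δ := by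
      have h1 := lt_of_lt_of_le hgx (min_le_left _ _)
      have h2 := lt_of_lt_of_le hhx (min_le_left _ _)
      calc |(g:ℝ) - (h:ℝ)| = |((g:ℝ) - x) - ((h:ℝ) - x)| := by congr 1; ring
        _ ≤ |(g:ℝ) - x| + |(h:ℝ) - x| := abs_sub _ _
        _ < δ := by linarith
    have hhb : ‖(π h : V →L[ℂ] V)‖ ≤ C := by
      apply hC
      have h2 := lt_of_lt_of_le hhx (min_le_right _ _)
      calc |(h:ℝ)| = |((h:ℝ) - x) + x| := by congr 1; ring
        _ ≤ |(h:ℝ) - x| + |x| := abs_add_le _ _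
        _ ≤ |x| + 1 := by linarith
    have key : (π h : V →L[ℂ] V) * ((π (g - h) : V →L[ℂ] V) - 1) =
        (π g : V →L[ℂ] V) - (π h : V →L[ℂ] V) := by
      have hmul : π h * π (g - h) = π g := by rw [← hπ]; congr 1; abel
      calc (π h : V →L[ℂ] V) * ((π (g - h) : V →L[ℂ] V) - 1)
          = (π h : V →L[ℂ] V) * (π (g - h) : V →L[ℂ] V) - (π h : V →L[ℂ] V) := by
            rw [mul_sub, mul_one]
        _ = _ := by rw [← Units.val_mul, hmul]
    rw [← key]
    calc ‖(π h : V →L[ℂ] V) * ((π (g - h) : V →L[ℂ] V) - 1)‖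
        ≤ ‖(π h : V →L[ℂ] V)‖ * ‖(π (g - h) : V →L[ℂ] V) - 1‖ := norm_mul_le _ _
      _ ≤ C * ‖(π (g - h) : V →L[ℂ] V) - 1‖ :=
          mul_le_mul_of_nonneg_right hhb (norm_nonneg _)
      _ < C * (ε / C) := by
          refine mul_lt_mul_of_pos_left ?_ hCpos
          apply hd
          push_cast
          exact hgh
      _ = ε := by field_simp
  -- dense inducing
  have hdi : IsDenseInducing ((↑) : G → ℝ) :=
    ⟨IsInducing.subtypeVal, by
      rw [DenseRange, Subtype.range_coe]
      exact hG⟩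
  set f : G → (V →L[ℂ] V) := fun g => (π g : V →L[ℂ] V) with hf
  have hlim : ∀ x : ℝ, ∃ c, Tendsto f (comap ((↑) : G → ℝ) (𝓝 x)) (𝓝 c) := by
    intro x
    have hne : NeBot (comap ((↑) : G → ℝ) (𝓝 x)) := hdi.comap_nhds_neBot x
    have hc : Cauchy (map f (comap ((↑) : G → ℝ) (𝓝 x))) := by
      rw [Metric.cauchy_iff]
      refine ⟨hne.map f, fun ε hε => ?_⟩
      obtain ⟨η, hηpos, hη⟩ := hL x ε hε
      refine ⟨f '' (((↑) : G → ℝ) ⁻¹' Metric.ball x η), ?_, ?_⟩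
      · exact image_mem_map (preimage_mem_comap (Metric.ball_mem_nhds x hηpos))
      · rintro _ ⟨g, hg, rfl⟩ _ ⟨h, hh, rfl⟩
        rw [dist_eq_norm]
        exact hη g h (by simpa [Real.dist_eq] using hg) (by simpa [Real.dist_eq] using hh)
    exact CompleteSpace.complete hc
  set F : ℝ → (V →L[ℂ] V) := hdi.extend f with hF
  have hFcont : Continuous F := by
    rw [continuous_iff_continuousAt]
    intro x
    exact hdi.continuousAt_extend (Filter.Eventually.of_forall hlim)
  have hFeq : ∀ g : G, F (g : ℝ) = f g := fun g => hdi.extend_eq hcont g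
  have hFadd : ∀ s t : ℝ, F (s + t) = F s * F t := by
    have hde : Dense ((G : Set ℝ) ×ˢ (G : Set ℝ)) := hG.prod hG
    have h1 : Continuous fun p : ℝ × ℝ => F (p.1 + p.2) :=
      hFcont.comp (continuous_fst.add continuous_snd)
    have h2 : Continuous fun p : ℝ × ℝ => F p.1 * F p.2 :=
      (hFcont.comp continuous_fst).mul (hFcont.comp continuous_snd)
    have heq : ∀ p ∈ (G : Set ℝ) ×ˢ (G : Set ℝ),
        F (p.1 + p.2) = F p.1 * F p.2 := by
      rintro ⟨x, y⟩ ⟨hx, hy⟩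
      have hxy : x + y = ((⟨x, hx⟩ + ⟨y, hy⟩ : G) : ℝ) := rfl
      have e1 : F x = f ⟨x, hx⟩ := hFeq ⟨x, hx⟩
      have e2 : F y = f ⟨y, hy⟩ := hFeq ⟨y, hy⟩
      show F (x + y) = F x * F y
      rw [hxy, hFeq, e1, e2]
      simp only [hf, hπ, Units.val_mul]
    have := Continuous.ext_on hde h1 h2 heq
    intro s t
    exact congrFun this (s, t)
  have hF0 : F 0 = 1 := by
    have h0 := hFeq 0
    simpa [hf, hone] using h0
  have hFinv : ∀ t : ℝ, F t * F (-t) = 1 := fun t => by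
    rw [← hFadd, add_neg_cancel, hF0]
  have hFinv' : ∀ t : ℝ, F (-t) * F t = 1 := fun t => by
    rw [← hFadd, neg_add_cancel, hF0]
  refine ⟨fun t => ⟨F t, F (-t), hFinv t, hFinv' t⟩, ?_, ?_, ?_⟩
  · intro s t
    exact Units.ext (hFadd s t)
  · exact hFcont
  · intro g
    exact Units.ext (hFeq g)
end

section
/- Let G be a dense additive subgroup of ℝ (with the subspace topology), let V be a finite-dimensional complex normed vector space, and let π : G → GL(V) be a continuous group homomorphism. Then π is bounded on bounded intervals: for every M > 0 there exists C > 0 such that ‖π(g)‖ ≤ C (operator norm) for all g ∈ G with |g| ≤ M. -/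
theorem stmt_5 (G : AddSubgroup ℝ) (hG : Dense (G : Set ℝ))
    (V : Type*) [NormedAddCommGroup V] [NormedSpace ℂ V] [FiniteDimensional ℂ V]
    (π : G → (V →L[ℂ] V)ˣ)
    (hπ : ∀ g h : G, π (g + h) = π g * π h)
    (hcont : Continuous fun g : G => (π g : V →L[ℂ] V)) :
    ∀ M : ℝ, 0 < M → ∃ C : ℝ, 0 < C ∧
      ∀ g : G, |(g : ℝ)| ≤ M → ‖(π g : V →L[ℂ] V)‖ ≤ C := by
  intro M hM
  have hπ0 : π 0 = 1 := by
    have h00 := hπ 0 0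
    rw [add_zero] at h00
    exact (left_eq_mul.mp h00)
  obtain ⟨δ, hδ, hδ'⟩ := Metric.continuousAt_iff.mp (hcont.continuousAt (x := 0)) 1 one_pos
  set C₀ : ℝ := ‖(π 0 : V →L[ℂ] V)‖ + 1 with hC₀def
  have hC₀1 : (1:ℝ) ≤ C₀ := le_add_of_nonneg_left (norm_nonneg _)
  have hC₀0 : (0:ℝ) < C₀ := lt_of_lt_of_le one_pos hC₀1
  have hbound : ∀ g : G, |(g:ℝ)| < δ → ‖(π g : V →L[ℂ] V)‖ ≤ C₀ := by
    intro g hg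
    have hd : dist g 0 < δ := by
      rw [Subtype.dist_eq, Real.dist_eq]
      simpa using hg
    have h1 := hδ' hd
    rw [dist_eq_norm] at h1
    have : ‖(π g : V →L[ℂ] V)‖ ≤ ‖(π g : V →L[ℂ] V) - (π 0 : V →L[ℂ] V)‖
        + ‖(π 0 : V →L[ℂ] V)‖ := by
      calc ‖(π g : V →L[ℂ] V)‖
          = ‖((π g : V →L[ℂ] V) - (π 0 : V →L[ℂ] V)) + (π 0 : V →L[ℂ] V)‖ := by
            rw [sub_add_cancel]
        _ ≤ _ := norm_add_le _ _
    simp only [hC₀def]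
    linarith
  have key : ∀ (k : ℕ) (h : G), ‖(π h : V →L[ℂ] V)‖ ≤ C₀ →
      ‖(π (k • h) : V →L[ℂ] V)‖ ≤ C₀ ^ k := by
    intro k
    induction k with
    | zero =>
      intro h _
      simp only [zero_smul, hπ0, Units.val_one, pow_zero]
      exact ContinuousLinearMap.norm_id_le
    | succ k ih =>
      intro h hh
      rw [succ_nsmul, hπ, Units.val_mul, pow_succ]
      exact le_trans (norm_mul_le _ _)
        (mul_le_mul (ih h hh) hh (norm_nonneg _) (pow_nonneg hC₀0.le k))
  set k : ℕ := ⌈2*M/δ⌉₊ with hk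
  refine ⟨C₀ ^ (k+1), pow_pos hC₀0 _, ?_⟩
  intro g hg
  set a : ℝ := (k:ℝ) with ha
  have ha0 : 0 ≤ a := Nat.cast_nonneg _
  have han : (0:ℝ) < a + 1 := by linarith
  have hn2 : 2*M/δ ≤ a := Nat.le_ceil _
  have h2M : 2*M < (a+1)*δ := by
    have := (div_le_iff₀ hδ).mp hn2
    nlinarith
  have hMn : M/(a+1) < δ/2 := by
    rw [div_lt_div_iff₀ han two_pos]
    nlinarith
  set y : ℝ := (g:ℝ) with hy
  obtain ⟨x, hxG, hx⟩ := hG.exists_dist_lt (y/(a+1)) (show (0:ℝ) < δ/(2*(a+1)) by positivity)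
  rw [Real.dist_eq] at hx
  set h : G := ⟨x, hxG⟩ with hh
  have hyM : |y| ≤ M := hg
  have hyan : |y/(a+1)| < δ/2 := by
    rw [abs_div, abs_of_pos han]
    calc |y|/(a+1) ≤ M/(a+1) := by gcongr
      _ < δ/2 := hMn
  have hxδ : |x| < δ := by
    have h1 : |x| ≤ |x - y/(a+1)| + |y/(a+1)| := by
      calc |x| = |(x - y/(a+1)) + y/(a+1)| := by ring_nf
        _ ≤ _ := abs_add_le _ _
    have h2 : |x - y/(a+1)| < δ/(2*(a+1)) := by rwa [abs_sub_comm]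
    have h3 : δ/(2*(a+1)) ≤ δ/2 := by
      apply div_le_div_of_nonneg_left hδ.le two_pos
      nlinarith
    linarith
  set r : G := g - k • h with hr
  have hrcoe : (r : ℝ) = y - a * x := by
    simp [hr, hh, hy, ha]
  have hrδ : |(r : ℝ)| < δ := by
    rw [hrcoe]
    have hid : y - a*x = y/(a+1) + a*(y/(a+1) - x) := by
      field_simp
      ring
    rw [hid]
    have h1 : |y/(a+1) + a*(y/(a+1) - x)| ≤ |y/(a+1)| + a * |y/(a+1) - x| := by
      calc |y/(a+1) + a*(y/(a+1) - x)| ≤ |y/(a+1)| + |a*(y/(a+1) - x)| := abs_add_le _ _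
        _ = |y/(a+1)| + a * |y/(a+1) - x| := by rw [abs_mul, abs_of_nonneg ha0]
    have h2 : a * |y/(a+1) - x| ≤ a * (δ/(2*(a+1))) :=
      mul_le_mul_of_nonneg_left hx.le ha0
    have h3 : a * (δ/(2*(a+1))) ≤ δ/2 := by
      have he : a * (δ/(2*(a+1))) = a*δ / (2*(a+1)) := by ring
      rw [he, div_le_div_iff₀ (by positivity) two_pos]
      nlinarith
    linarith
  have hgeq : k • h + r = g := by
    rw [hr]
    abel
  have hπh : ‖(π h : V →L[ℂ] V)‖ ≤ C₀ := hbound h hxδ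
  have hπr : ‖(π r : V →L[ℂ] V)‖ ≤ C₀ := hbound r hrδ
  calc ‖(π g : V →L[ℂ] V)‖ = ‖(π (k • h + r) : V →L[ℂ] V)‖ := by rw [hgeq]
    _ = ‖((π (k • h) : V →L[ℂ] V)) * ((π r : V →L[ℂ] V))‖ := by rw [hπ, Units.val_mul]
    _ ≤ ‖(π (k • h) : V →L[ℂ] V)‖ * ‖(π r : V →L[ℂ] V)‖ := norm_mul_le _ _
    _ ≤ C₀ ^ k * C₀ := mul_le_mul (key k h hπh) hπr (norm_nonneg _) (pow_nonneg hC₀0.le k)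
    _ = C₀ ^ (k+1) := (pow_succ _ _).symm
end

section
/- Let R be a commutative ring, let E and F be finitely generated projective R-modules, and let φ : E → F be an R-linear map. Then the R-modules ker φ, im φ, and coker φ = F/(im φ) are all finitely generated projective if and only if there exists an R-linear map ψ : F → E satisfying φ ∘ ψ ∘ φ = φ. -/
theorem stmt_6 (R : Type*) [CommRing R]
    (E F : Type*) [AddCommGroup E] [Module R E] [AddCommGroup F] [Module R F]
    [Module.Finite R E] [Module.Projective R E]
    [Module.Finite R F] [Module.Projective R F]
    (φ : E →ₗ[R] F) :
    (Module.Finite R (LinearMap.ker φ) ∧ Module.Projective R (LinearMap.ker φ) ∧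
     Module.Finite R (LinearMap.range φ) ∧ Module.Projective R (LinearMap.range φ) ∧
     Module.Finite R (F ⧸ LinearMap.range φ) ∧
     Module.Projective R (F ⧸ LinearMap.range φ)) ↔
    ∃ ψ : F →ₗ[R] E, φ ∘ₗ ψ ∘ₗ φ = φ := by
  constructor
  · rintro ⟨-, -, -, hrp, -, hcp⟩
    obtain ⟨s, hs⟩ := Module.projective_lifting_property φ.rangeRestrict LinearMap.id
      φ.surjective_rangeRestrict
    obtain ⟨t, ht⟩ := Module.projective_lifting_property (LinearMap.range φ).mkQ LinearMap.id
      (Submodule.mkQ_surjective _)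
    have hq : ∀ y : F, y - t ((LinearMap.range φ).mkQ y) ∈ LinearMap.range φ := by
      intro y
      rw [← Submodule.Quotient.mk_eq_zero, ← Submodule.mkQ_apply]
      have h1 := LinearMap.congr_fun ht ((LinearMap.range φ).mkQ y)
      simp only [LinearMap.comp_apply, LinearMap.id_apply] at h1
      rw [map_sub, h1, sub_self]
    refine ⟨s ∘ₗ LinearMap.codRestrict (LinearMap.range φ)
      ((LinearMap.id : F →ₗ[R] F) - t ∘ₗ (LinearMap.range φ).mkQ)
      (fun y => by simpa using hq y), ?_⟩
    ext x
    have hφs : ∀ z : LinearMap.range φ, φ (s z) = (z : F) := by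
      intro z
      have h2 := LinearMap.congr_fun hs z
      simp only [LinearMap.comp_apply, LinearMap.id_apply] at h2
      calc φ (s z) = ((φ.rangeRestrict (s z)) : F) := rfl
        _ = (z : F) := by rw [h2]
    simp only [LinearMap.comp_apply]
    rw [hφs]
    have h3 : (LinearMap.range φ).mkQ (φ x) = 0 := by
      simp [Submodule.Quotient.mk_eq_zero]
    simp [h3]
  · rintro ⟨ψ, hψ⟩
    have heq : ∀ x : E, ψ (φ (ψ (φ x))) = ψ (φ x) := by
      intro x
      have h := LinearMap.congr_fun hψ x
      simp only [LinearMap.comp_apply] at h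
      rw [h]
    have hpeq : ∀ y : F, y ∈ LinearMap.range φ → φ (ψ y) = y := by
      rintro y ⟨x, rfl⟩
      exact LinearMap.congr_fun hψ x
    set e : E →ₗ[R] E := LinearMap.id - ψ ∘ₗ φ with he
    have heapp : ∀ x : E, e x = x - ψ (φ x) := fun x => rfl
    have hker : LinearMap.ker φ = LinearMap.range e := by
      ext x
      constructor
      · intro hx
        exact ⟨x, by rw [heapp, LinearMap.mem_ker.mp hx, map_zero, sub_zero]⟩
      · rintro ⟨z, rfl⟩
        rw [LinearMap.mem_ker, heapp, map_sub]
        have h := LinearMap.congr_fun hψ z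
        simp only [LinearMap.comp_apply] at h
        rw [h, sub_self]
    have hkfin : Module.Finite R (LinearMap.ker φ) := by
      rw [hker]; infer_instance
    have hkproj : Module.Projective R (LinearMap.ker φ) := by
      rw [hker]
      refine Module.Projective.of_split (LinearMap.range e).subtype
        (LinearMap.codRestrict (LinearMap.range e) e
          (fun x => LinearMap.mem_range_self e x)) ?_
      ext x
      rcases x with ⟨_, z, rfl⟩
      show e (e z) = e z
      have h := LinearMap.congr_fun hψ z
      simp only [LinearMap.comp_apply] at h
      simp only [heapp, map_sub, h, sub_self, map_zero, sub_zero]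
    have hrproj : Module.Projective R (LinearMap.range φ) := by
      refine Module.Projective.of_split (LinearMap.range φ).subtype
        (LinearMap.codRestrict (LinearMap.range φ) (φ ∘ₗ ψ)
          (fun y => LinearMap.mem_range_self φ (ψ y))) ?_
      ext y
      exact hpeq y y.2
    have hcproj : Module.Projective R (F ⧸ LinearMap.range φ) := by
      set p : F →ₗ[R] F := LinearMap.id - φ ∘ₗ ψ with hp
      have hpapp : ∀ y : F, p y = y - φ (ψ y) := fun y => rfl
      have h0 : ∀ y ∈ LinearMap.range φ, y ∈ LinearMap.ker p := by
        intro y hy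
        rw [LinearMap.mem_ker, hpapp, hpeq y hy, sub_self]
      refine Module.Projective.of_split ((LinearMap.range φ).liftQ p h0)
        (LinearMap.range φ).mkQ ?_
      ext y
      simp only [LinearMap.comp_apply, Submodule.mkQ_apply, LinearMap.id_apply,
        Submodule.liftQ_apply, hpapp, map_sub]
      have h4 : (LinearMap.range φ).mkQ (φ (ψ y)) = 0 := by
        simp [Submodule.Quotient.mk_eq_zero]
      simp only [Submodule.mkQ_apply] at h4
      rw [h4, sub_zero]
    exact ⟨hkfin, hkproj, inferInstance, hrproj, inferInstance, hcproj⟩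
end

section
/- Let A be a commutative unital C*-algebra, let n ≥ 1, and let φ ∈ M_n(A). Let χ ∈ A[x] be the characteristic polynomial of φ*φ. Suppose there is m with 0 ≤ m ≤ n such that the coefficient of x^k in χ is 0 for every k < m, and the coefficient of x^m in χ is invertible in A. Then there exists ψ ∈ M_n(A) such that φψφ = φ. -/
open Matrix

open Polynomial

section AuxCStar

variable {A : Type*} [NormedCommRing A] [StarRing A] [CStarRing A]
    [CompleteSpace A] [NormedAlgebra ℂ A] [StarModule ℂ A] {n : ℕ}

lemma aux_zero_of_ct_mul_self (M : Matrix (Fin n) (Fin n) A) (h : Mᴴ * M = 0) : M = 0 := by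
  letI : CStarAlgebra A := { }
  letI := CStarAlgebra.spectralOrder A
  haveI := CStarAlgebra.spectralOrderedRing A
  ext i j
  have hd : (Mᴴ * M) j j = 0 := by rw [h]; rfl
  rw [Matrix.mul_apply] at hd
  simp only [Matrix.conjTranspose_apply] at hd
  have := (Finset.sum_eq_zero_iff_of_nonneg (fun k _ => star_mul_self_nonneg (M k j))).mp hd
    i (Finset.mem_univ i)
  simpa using (CStarRing.star_mul_self_eq_zero_iff (M i j)).mp this

lemma aux_herm_nilpotent (X : Matrix (Fin n) (Fin n) A) (hX : Xᴴ = X) {N : ℕ} (hN : 1 ≤ N)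
    (h : X ^ N = 0) : X = 0 := by
  have key : ∀ k, X ^ (2 ^ k) = 0 → X = 0 := by
    intro k
    induction k with
    | zero => simpa using id
    | succ k ih =>
      intro h2
      apply ih
      apply aux_zero_of_ct_mul_self
      rw [Matrix.conjTranspose_pow, hX, ← pow_add]
      rw [← h2]
      congr 1
      omega
  refine key N ?_
  have : 2 ^ N = N + (2 ^ N - N) := by have := Nat.lt_two_pow_self (n := N); omega
  rw [this, pow_add, h, zero_mul]

lemma aux_aeval_ct (B : Matrix (Fin n) (Fin n) A) (q : A[X]) :
    (Polynomial.aeval B q)ᴴ = Polynomial.aeval Bᴴ (q.map (starRingEnd A)) := by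
  induction q using Polynomial.induction_on' with
  | add p q hp hq => simp [hp, hq]
  | monomial k a =>
      simp only [Polynomial.aeval_monomial, Polynomial.map_monomial]
      rw [Matrix.conjTranspose_mul, Matrix.conjTranspose_pow, ← Matrix.conjTranspose_pow,
        Matrix.conjTranspose_pow]
      have hct : ((algebraMap A (Matrix (Fin n) (Fin n) A)) a)ᴴ
            = algebraMap A (Matrix (Fin n) (Fin n) A) (star a) := by
        ext i j
        by_cases hij : i = j <;>
          simp [Matrix.algebraMap_matrix_apply, hij, Ne.symm, eq_comm (a := i)]
      rw [hct]
      exact (Algebra.commutes _ _).symm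

lemma aux_pow_shift (φ : Matrix (Fin n) (Fin n) A) (k : ℕ) :
    (φ * φᴴ) ^ k * φ = φ * (φᴴ * φ) ^ k := by
  induction k with
  | zero => simp
  | succ k ih =>
      calc (φ * φᴴ) ^ (k+1) * φ
          = (φ * φᴴ) ^ k * φ * (φᴴ * φ) := by rw [pow_succ]; simp only [mul_assoc]
        _ = φ * ((φᴴ * φ) ^ k * (φᴴ * φ)) := by rw [ih, mul_assoc]
        _ = φ * (φᴴ * φ) ^ (k+1) := by rw [← pow_succ]

lemma aux_aeval_shift (φ : Matrix (Fin n) (Fin n) A) (q : A[X]) :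
    Polynomial.aeval (φ * φᴴ) q * φ = φ * Polynomial.aeval (φᴴ * φ) q := by
  induction q using Polynomial.induction_on' with
  | add p q hp hq => simp [add_mul, mul_add, hp, hq]
  | monomial k a =>
      simp only [Polynomial.aeval_monomial]
      rw [mul_assoc, aux_pow_shift, ← mul_assoc, Algebra.commutes a φ, mul_assoc]

end AuxCStar

theorem stmt_8 (A : Type*) [NormedCommRing A] [StarRing A] [CStarRing A]
    [CompleteSpace A] [NormedAlgebra ℂ A] [StarModule ℂ A]
    (n : ℕ) (hn : 1 ≤ n) (φ : Matrix (Fin n) (Fin n) A)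
    (m : ℕ) (hm : m ≤ n)
    (hlow : ∀ k, k < m → (Matrix.charpoly (φᴴ * φ)).coeff k = 0)
    (hunit : IsUnit ((Matrix.charpoly (φᴴ * φ)).coeff m)) :
    ∃ ψ : Matrix (Fin n) (Fin n) A, φ * ψ * φ = φ := by
  obtain ⟨v, hv⟩ := hunit
  obtain ⟨r, hr⟩ := (Polynomial.X_pow_dvd_iff).mpr hlow
  have hr0 : r.coeff 0 = (Matrix.charpoly (φᴴ * φ)).coeff m := by
    rw [hr]
    simpa using (Polynomial.coeff_X_pow_mul r m 0).symm
  set p : A[X] := r.divX with hp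
  have hre : (X : A[X]) * p + C (r.coeff 0) = r := Polynomial.X_mul_divX_add r
  set u : A := ↑v⁻¹ with hudef
  have hu : (C u) * C ((Matrix.charpoly (φᴴ * φ)).coeff m) = 1 := by
    rw [← Polynomial.C_mul, hudef, ← hv, Units.inv_mul, Polynomial.C_1]
  set s : A[X] := -(p * C u) with hs
  set e : A[X] := 1 - X * s with he
  set e' : A[X] := e.map (starRingEnd A) with he'
  have hB : (φᴴ * φ)ᴴ = φᴴ * φ := by
    rw [Matrix.conjTranspose_mul, Matrix.conjTranspose_conjTranspose]
  have hpoly : (X : A[X]) ^ m * e = C u * Matrix.charpoly (φᴴ * φ) := by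
    rw [hr, ← hre, hr0, he, hs]
    linear_combination (-((X : A[X]) ^ m)) * hu
  have hkey : Polynomial.aeval (φᴴ * φ) ((X : A[X]) ^ m * e) = 0 := by
    rw [hpoly, _root_.map_mul, Matrix.aeval_self_charpoly, mul_zero]
  have hφE : φ * Polynomial.aeval (φᴴ * φ) e = 0 := by
    rcases Nat.eq_zero_or_pos m with hm0 | hmpos
    · subst hm0
      simp only [pow_zero, one_mul] at hkey
      rw [hkey, mul_zero]
    · set g : A[X] := e' * X * e with hg
      have hgm : g ^ m = ((X : A[X]) ^ m * e) * (e' ^ m * e ^ (m - 1)) := by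
        obtain ⟨m', rfl⟩ : ∃ m', m = m' + 1 := ⟨m - 1, by omega⟩
        rw [Nat.add_sub_cancel, hg, mul_pow, mul_pow, pow_succ]
        ring
      have hGm : (Polynomial.aeval (φᴴ * φ) g) ^ m = 0 := by
        rw [← _root_.map_pow, hgm, _root_.map_mul, hkey, zero_mul]
      have hmapstar : g.map (starRingEnd A) = e * X * e' := by
        simp only [hg, Polynomial.map_mul, Polynomial.map_X, he', Polynomial.map_map]
        have : (starRingEnd A).comp (starRingEnd A) = RingHom.id A := by
          ext a; simp
        rw [this, Polynomial.map_id]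
      have hherm : (Polynomial.aeval (φᴴ * φ) g)ᴴ = Polynomial.aeval (φᴴ * φ) g := by
        have hcomm : e * X * e' = e' * X * e := by ring
        rw [aux_aeval_ct, hB, hmapstar, hcomm, ← hg]
      have hG0 : Polynomial.aeval (φᴴ * φ) g = 0 :=
        aux_herm_nilpotent _ hherm hmpos hGm
      apply aux_zero_of_ct_mul_self
      have hEct : (Polynomial.aeval (φᴴ * φ) e)ᴴ = Polynomial.aeval (φᴴ * φ) e' := by
        rw [aux_aeval_ct, hB, he']
      calc (φ * Polynomial.aeval (φᴴ * φ) e)ᴴ * (φ * Polynomial.aeval (φᴴ * φ) e)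
          = Polynomial.aeval (φᴴ * φ) e' * (φᴴ * φ) * Polynomial.aeval (φᴴ * φ) e := by
            rw [Matrix.conjTranspose_mul, hEct]
            simp only [mul_assoc]
        _ = Polynomial.aeval (φᴴ * φ) g := by
            rw [hg, _root_.map_mul, _root_.map_mul, Polynomial.aeval_X]
        _ = 0 := hG0
  have hmain : φ = φ * Polynomial.aeval (φᴴ * φ) (X * s) := by
    have := hφE
    rw [he, _root_.map_sub, _root_.map_one, mul_sub, mul_one, sub_eq_zero] at this
    exact this
  refine ⟨φᴴ * Polynomial.aeval (φ * φᴴ) s, ?_⟩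
  calc φ * (φᴴ * Polynomial.aeval (φ * φᴴ) s) * φ
      = φ * φᴴ * (Polynomial.aeval (φ * φᴴ) s * φ) := by simp only [mul_assoc]
    _ = φ * ((φᴴ * φ) * Polynomial.aeval (φᴴ * φ) s) := by
        rw [aux_aeval_shift]; simp only [mul_assoc]
    _ = φ * Polynomial.aeval (φᴴ * φ) (X * s) := by
        rw [_root_.map_mul, Polynomial.aeval_X]
    _ = φ := hmain.symm
end

section
/- Let n ≥ 1 and let Θ be a skew-symmetric n×n real matrix (Θᵀ = −Θ). Let Λ = {r ∈ ℤⁿ : Θr ∈ ℤⁿ}. Then the topological closure in ℝⁿ of the additive subgroup ℤⁿ + Θℤⁿ equals the set {u ∈ ℝⁿ : ∑_{i} r_i·u_i ∈ ℤ for every r ∈ Λ}. -/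
open Matrix Submodule Module Topology Filter

theorem aux_line {E : Type*} [NormedAddCommGroup E] [NormedSpace ℝ E] [ProperSpace E]
    (H : AddSubgroup E) (hH : IsClosed (H : Set E))
    (h : ∀ ε : ℝ, 0 < ε → ∃ x, x ∈ H ∧ x ≠ 0 ∧ ‖x‖ < ε) :
    ∃ v : E, v ≠ 0 ∧ ∀ t : ℝ, t • v ∈ H := by
  choose f hfH hf0 hfn using fun k : ℕ => h (1 / (k + 1)) (by positivity)
  have hfnorm : ∀ k, (0 : ℝ) < ‖f k‖ := fun k => norm_pos_iff.mpr (hf0 k)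
  set u : ℕ → E := fun k => ‖f k‖⁻¹ • f k with hu
  have hus : ∀ k, u k ∈ Metric.sphere (0 : E) 1 := by
    intro k
    simp [hu, norm_smul, abs_of_pos (inv_pos.mpr (hfnorm k)),
      inv_mul_cancel₀ (hfnorm k).ne']
  obtain ⟨v, hv, φ, hφ, hconv⟩ :=
    (isCompact_sphere (0 : E) 1).tendsto_subseq hus
  have hvne : v ≠ 0 := by
    intro h0
    rw [h0] at hv
    simp at hv
  refine ⟨v, hvne, fun t => ?_⟩
  -- the norms tend to zero
  have hnorm0 : Tendsto (fun k => ‖f (φ k)‖) atTop (𝓝 0) := by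
    have h1 : Tendsto (fun k : ℕ => 1 / ((k : ℝ) + 1)) atTop (𝓝 0) :=
      tendsto_one_div_add_atTop_nhds_zero_nat
    refine squeeze_zero (fun k => (hfnorm _).le) (fun k => ?_)
      (h1.comp hφ.tendsto_atTop)
    exact (hfn (φ k)).le.trans (by norm_num)
  set c : ℕ → ℝ := fun k => (⌊t / ‖f (φ k)‖⌋ : ℝ) * ‖f (φ k)‖ with hc
  have hct : Tendsto c atTop (𝓝 t) := by
    rw [tendsto_iff_dist_tendsto_zero]
    refine squeeze_zero (fun k => dist_nonneg) (fun k => ?_) hnorm0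
    have hck : c k = (⌊t / ‖f (φ k)‖⌋ : ℝ) * ‖f (φ k)‖ := rfl
    rw [Real.dist_eq, hck, abs_le]
    constructor
    · have := Int.sub_one_lt_floor (t / ‖f (φ k)‖)
      have h2 : (t / ‖f (φ k)‖ - 1) * ‖f (φ k)‖ ≤ (⌊t / ‖f (φ k)‖⌋ : ℝ) * ‖f (φ k)‖ :=
        mul_le_mul_of_nonneg_right this.le (hfnorm _).le
      have h3 : (t / ‖f (φ k)‖ - 1) * ‖f (φ k)‖ = t - ‖f (φ k)‖ := by
        rw [sub_mul, one_mul, div_mul_cancel₀ t (hfnorm _).ne']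
      linarith
    · have := Int.floor_le (t / ‖f (φ k)‖)
      have h2 : (⌊t / ‖f (φ k)‖⌋ : ℝ) * ‖f (φ k)‖ ≤ (t / ‖f (φ k)‖) * ‖f (φ k)‖ :=
        mul_le_mul_of_nonneg_right this (hfnorm _).le
      have h3 : (t / ‖f (φ k)‖) * ‖f (φ k)‖ = t := div_mul_cancel₀ t (hfnorm _).ne'
      linarith [(hfnorm (φ k))]
  have hg : Tendsto (fun k => c k • u (φ k)) atTop (𝓝 (t • v)) := hct.smul hconv
  have hmem : ∀ k, c k • u (φ k) ∈ H := by
    intro k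
    have : c k • u (φ k) = ⌊t / ‖f (φ k)‖⌋ • f (φ k) := by
      rw [hc, hu]
      rw [← Int.cast_smul_eq_zsmul ℝ, smul_smul]
      congr 1
      rw [mul_assoc, mul_inv_cancel₀ (hfnorm _).ne', mul_one]
    rw [this]
    exact zsmul_mem (hfH (φ k)) _
  exact hH.mem_of_tendsto hg (Eventually.of_forall hmem)


theorem aux_discrete {E : Type*} [NormedAddCommGroup E] [NormedSpace ℝ E]
    [FiniteDimensional ℝ E] (L : Submodule ℤ E) [DiscreteTopology L] (w : E)
    (hw : ∀ ψ : E →ₗ[ℝ] ℝ, (∀ x ∈ L, ∃ z : ℤ, ψ x = (z : ℝ)) → ∃ z : ℤ, ψ w = (z : ℝ)) :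
    w ∈ L := by
  set U : Submodule ℝ E := span ℝ (L : Set E) with hU
  -- step 1 : w ∈ U
  have hwU : w ∈ U := by
    by_contra hwn
    obtain ⟨g, hg1, hg2⟩ := U.exists_dual_map_eq_bot_of_notMem hwn inferInstance
    have hgU : ∀ x ∈ U, g x = 0 := by
      intro x hx
      have : g x ∈ U.map g := Submodule.mem_map_of_mem hx
      rwa [hg2, Submodule.mem_bot] at this
    obtain ⟨z, hz⟩ := hw (((g w)⁻¹ * (1 / 2)) • g) (fun x hx => ⟨0, by
      simp [hgU x (subset_span hx)]⟩)
    simp only [LinearMap.smul_apply, smul_eq_mul] at hz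
    rw [show (g w)⁻¹ * (1 / 2) * g w = 1 / 2 by field_simp] at hz
    have h2 : ((2 * z : ℤ) : ℝ) = 1 := by push_cast [← hz]; ring
    have : (2 * z : ℤ) = 1 := by exact_mod_cast h2
    omega
  -- step 2 : the lattice L₀ inside U
  set f : U →ₗ[ℝ] E := U.subtype with hf
  set L₀ : Submodule ℤ U := L.comap (f.restrictScalars ℤ) with hL₀
  have h_img : f '' L₀ = L := by
    rw [← LinearMap.coe_restrictScalars ℤ f, ← Submodule.map_coe (f.restrictScalars ℤ),
      Submodule.map_comap_eq_self]
    exact fun x hx => LinearMap.mem_range.mpr ⟨⟨x, subset_span hx⟩, rfl⟩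
  haveI hd : DiscreteTopology L₀ := by
    refine DiscreteTopology.preimage_of_continuous_injective (L : Set E) ?_ (injective_subtype _)
    exact LinearMap.continuous_of_finiteDimensional f
  haveI hzl : IsZLattice ℝ L₀ := ⟨by
    rw [← (Submodule.map_injective_of_injective (injective_subtype U)).eq_iff,
      Submodule.map_span, Submodule.map_top, range_subtype, h_img]⟩
  have : Module.Finite ℤ L₀ := inferInstance
  have : Module.Free ℤ L₀ := inferInstance
  set b := Module.Free.chooseBasis ℤ L₀ with hb
  set B := b.ofZLatticeBasis ℝ L₀ with hB
  set w' : U := ⟨w, hwU⟩ with hw'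
  -- all coordinates of w' are integers
  have hcoord : ∀ i, ∃ z : ℤ, B.repr w' i = (z : ℝ) := by
    intro i
    obtain ⟨ψ, hψ⟩ := LinearMap.exists_extend (B.coord i)
    refine Exists.imp (fun z hz => ?_) (hw ψ (fun x hx => ?_))
    · rw [← hz]
      have : ψ w = ψ (f w') := rfl
      rw [this, ← LinearMap.comp_apply, hψ, Basis.coord_apply]
    · have hxU : x ∈ U := subset_span hx
      have hx0 : (⟨x, hxU⟩ : U) ∈ L₀ := by
        exact hx
      refine ⟨b.repr (⟨⟨x, hxU⟩, hx0⟩ : L₀) i, ?_⟩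
      have : ψ x = ψ (f ⟨x, hxU⟩) := rfl
      rw [this, ← LinearMap.comp_apply, hψ, Basis.coord_apply]
      exact b.ofZLatticeBasis_repr_apply ℝ L₀ (⟨⟨x, hxU⟩, hx0⟩ : L₀) i
  choose z hz using hcoord
  have hw'L : w' ∈ L₀ := by
    have hsum := B.sum_repr w'
    rw [← hsum]
    refine Submodule.sum_mem _ (fun i _ => ?_)
    rw [hz i, Int.cast_smul_eq_zsmul]
    have : B i = ((b i : U) : U) := b.ofZLatticeBasis_apply ℝ L₀ i
    rw [this]
    exact zsmul_mem (b i).2 _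
  exact hw'L


theorem stmt_11 (n : ℕ) (hn : 1 ≤ n)
    (Θ : Matrix (Fin n) (Fin n) ℝ) (hΘ : Θᵀ = -Θ) :
    closure {u : Fin n → ℝ | ∃ x y : Fin n → ℤ,
        u = (fun i => (x i : ℝ)) + Θ.mulVec (fun i => (y i : ℝ))} =
      {u : Fin n → ℝ | ∀ r : Fin n → ℤ,
        (∀ i, ∃ z : ℤ, Θ.mulVec (fun j => (r j : ℝ)) i = (z : ℝ)) →
        ∃ z : ℤ, (∑ i, (r i : ℝ) * u i) = (z : ℝ)} := by
  classical
  set S : Set (Fin n → ℝ) := {u : Fin n → ℝ | ∃ x y : Fin n → ℤ,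
      u = (fun i => (x i : ℝ)) + Θ.mulVec (fun i => (y i : ℝ))} with hSdef
  have castadd : ∀ x y : Fin n → ℤ, (fun i => (((x + y) i : ℤ) : ℝ))
      = (fun i => (x i : ℝ)) + (fun i => (y i : ℝ)) := by
    intro x y; funext i; push_cast; simp
  have castneg : ∀ x : Fin n → ℤ, (fun i => (((-x) i : ℤ) : ℝ)) = -(fun i => (x i : ℝ)) := by
    intro x; funext i; push_cast; simp
  have castzero : (fun i => (((0 : Fin n → ℤ) i : ℤ) : ℝ)) = (0 : Fin n → ℝ) := by
    funext i; simp
  let G : AddSubgroup (Fin n → ℝ) :=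
  { carrier := S
    zero_mem' := ⟨0, 0, by rw [castzero, Matrix.mulVec_zero, add_zero]⟩
    add_mem' := by
      rintro a b ⟨x1, y1, rfl⟩ ⟨x2, y2, rfl⟩
      refine ⟨x1 + x2, y1 + y2, ?_⟩
      rw [castadd, castadd, Matrix.mulVec_add]
      abel
    neg_mem' := by
      rintro a ⟨x, y, rfl⟩
      refine ⟨-x, -y, ?_⟩
      rw [castneg, castneg, Matrix.mulVec_neg]
      abel }
  -- skew symmetry pointwise
  have hskew : ∀ i j, Θ j i = -Θ i j := by
    intro i j
    have := congrFun (congrFun hΘ i) j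
    simpa [Matrix.transpose_apply, Matrix.neg_apply] using this
  apply Set.Subset.antisymm
  · -- easy direction
    intro u hu
    intro r hr
    choose zc hzc using hr
    have hcont : Continuous (fun v : Fin n → ℝ => ∑ i, (r i : ℝ) * v i) :=
      continuous_finset_sum _ fun i _ => continuous_const.mul (continuous_apply i)
    have hcl : IsClosed {v : Fin n → ℝ | ∃ z : ℤ, (∑ i, (r i : ℝ) * v i) = (z : ℝ)} := by
      have heq : {v : Fin n → ℝ | ∃ z : ℤ, (∑ i, (r i : ℝ) * v i) = (z : ℝ)}
          = (fun v : Fin n → ℝ => ∑ i, (r i : ℝ) * v i) ⁻¹' (Set.range ((↑) : ℤ → ℝ)) := by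
        ext v
        simp [Set.mem_preimage, Set.mem_range, eq_comm]
      rw [heq]
      exact Int.isClosedEmbedding_coe_real.isClosed_range.preimage hcont
    refine closure_minimal ?_ hcl hu
    rintro s ⟨x, y, rfl⟩
    have key : ∀ j, (∑ i, Θ i j * (r i : ℝ)) = -(zc j : ℝ) := by
      intro j
      have h1 : Θᵀ.mulVec (fun i => (r i : ℝ)) j = ∑ i, Θᵀ j i * (r i : ℝ) := rfl
      have h2 : Θᵀ.mulVec (fun i => (r i : ℝ)) j
          = -(Θ.mulVec (fun i => (r i : ℝ)) j) := by
        rw [hΘ, Matrix.neg_mulVec]; rfl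
      rw [h1] at h2
      simp only [Matrix.transpose_apply] at h2
      rw [h2, hzc j]
    refine ⟨(∑ i, r i * x i) - ∑ j, zc j * y j, ?_⟩
    have expand : ∀ i, (r i : ℝ) * (((fun i => (x i : ℝ)) +
        Θ.mulVec (fun i => (y i : ℝ))) i)
        = (r i : ℝ) * (x i : ℝ) + ∑ j, (r i : ℝ) * (Θ i j * (y j : ℝ)) := by
      intro i
      simp only [Pi.add_apply, Matrix.mulVec, dotProduct]
      rw [mul_add, Finset.mul_sum]
    rw [Finset.sum_congr rfl (fun i _ => expand i), Finset.sum_add_distrib]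
    rw [Finset.sum_comm (γ := Fin n)]
    have hsum2 : ∀ j, (∑ i, (r i : ℝ) * (Θ i j * (y j : ℝ))) = -(zc j : ℝ) * (y j : ℝ) := by
      intro j
      have h3 : (∑ i, (r i : ℝ) * (Θ i j * (y j : ℝ)))
          = (∑ i, Θ i j * (r i : ℝ)) * (y j : ℝ) := by
        rw [Finset.sum_mul]
        exact Finset.sum_congr rfl fun i _ => by ring
      rw [h3, key j]
    rw [Finset.sum_congr rfl fun j _ => hsum2 j]
    push_cast
    rw [sub_eq_add_neg, ← Finset.sum_neg_distrib]
    exact congrArg _ (Finset.sum_congr rfl fun j _ => by ring)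
  · intro u hu
    -- `hu : u` is in the right-hand set; show `u ∈ closure S`
    -- Step 1: a bridging statement for arbitrary linear functionals
    have castite : ∀ i : Fin n, (fun j => (((fun j => if i = j then (1 : ℤ) else 0) : Fin n → ℤ) j : ℝ))
        = (fun j => if i = j then (1 : ℝ) else 0) := by
      intro i; funext j; simp [apply_ite]
    have heS : ∀ i : Fin n, (fun j => if i = j then (1 : ℝ) else 0) ∈ S := by
      intro i
      exact ⟨(fun j => if i = j then (1 : ℤ) else 0), 0, by
        rw [castite, castzero, Matrix.mulVec_zero, add_zero]⟩
    have hcolS : ∀ i : Fin n, Θ.mulVec (fun j => if i = j then (1 : ℝ) else 0) ∈ S := by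
      intro i
      exact ⟨0, (fun j => if i = j then (1 : ℤ) else 0), by
        rw [castzero, castite, zero_add]⟩
    have hphi : ∀ φ : (Fin n → ℝ) →ₗ[ℝ] ℝ, (∀ s ∈ S, ∃ z : ℤ, φ s = (z : ℝ)) →
        ∃ z : ℤ, φ u = (z : ℝ) := by
      intro φ hφS
      choose r hr using fun i => hφS _ (heS i)
      have hrep : ∀ v : Fin n → ℝ, φ v = ∑ i, v i * (r i : ℝ) := by
        intro v
        conv_lhs => rw [pi_eq_sum_univ v]
        rw [map_sum]
        exact Finset.sum_congr rfl fun i _ => by rw [LinearMap.map_smul, smul_eq_mul, hr i]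
      have hcol : ∀ j, ∃ z : ℤ, (∑ i, Θ i j * (r i : ℝ)) = (z : ℝ) := by
        intro j
        obtain ⟨z, hz⟩ := hφS _ (hcolS j)
        refine ⟨z, ?_⟩
        rw [hrep] at hz
        rw [← hz]
        refine Finset.sum_congr rfl fun i _ => ?_
        have hcc : Θ.mulVec (fun k => if j = k then (1 : ℝ) else 0) i = Θ i j := by
          simp [Matrix.mulVec, dotProduct, mul_ite]
        rw [hcc]
      choose zc hzc using hcol
      have hint : ∀ i, ∃ z : ℤ, Θ.mulVec (fun j => (r j : ℝ)) i = (z : ℝ) := by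
        intro i
        refine ⟨-zc i, ?_⟩
        have h6 : Θ.mulVec (fun j => (r j : ℝ)) i = ∑ k, Θ i k * (r k : ℝ) := rfl
        rw [h6]
        have h4 : (∑ k, Θ i k * (r k : ℝ)) = -∑ k, Θ k i * (r k : ℝ) := by
          rw [← Finset.sum_neg_distrib]
          exact Finset.sum_congr rfl fun k _ => by rw [hskew k i]; ring
        rw [h4, hzc i]; push_cast; ring
      obtain ⟨Z, hZ⟩ := hu r hint
      exact ⟨Z, by rw [hrep u, ← hZ]; exact Finset.sum_congr rfl fun i _ => mul_comm _ _⟩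
    -- Step 2: structure of the closure
    have hGS : (G : Set (Fin n → ℝ)) = S := rfl
    set H : AddSubgroup (Fin n → ℝ) := G.topologicalClosure with hHdef
    have hHc : IsClosed (H : Set (Fin n → ℝ)) := AddSubgroup.isClosed_topologicalClosure G
    have hHS : (H : Set (Fin n → ℝ)) = closure S := by
      rw [hHdef, AddSubgroup.topologicalClosure_coe, hGS]
    have hSH : ∀ s ∈ S, s ∈ H := fun s hs => G.le_topologicalClosure hs
    set V : Submodule ℝ (Fin n → ℝ) :=
      { carrier := {x : Fin n → ℝ | ∀ t : ℝ, t • x ∈ H}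
        add_mem' := by intro a b ha hb t; rw [smul_add]; exact H.add_mem (ha t) (hb t)
        zero_mem' := by intro t; rw [smul_zero]; exact H.zero_mem
        smul_mem' := by intro c x hx t; rw [smul_smul]; exact hx (t * c) } with hVdef
    have hVmem : ∀ x : Fin n → ℝ, x ∈ V ↔ ∀ t : ℝ, t • x ∈ H := fun x => Iff.rfl
    have hVH : ∀ x ∈ V, x ∈ H := fun x hx => by
      have := (hVmem x).1 hx 1
      rwa [one_smul] at this
    obtain ⟨W, hW⟩ := Submodule.exists_isCompl V
    have hWclosed : IsClosed (W : Set (Fin n → ℝ)) := Submodule.closed_of_finiteDimensional W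
    set L : Submodule ℤ (Fin n → ℝ) :=
      (AddSubgroup.toIntSubmodule H) ⊓ (W.restrictScalars ℤ) with hLdef
    have hLmem : ∀ x : Fin n → ℝ, x ∈ L ↔ x ∈ H ∧ x ∈ W := fun x => Iff.rfl
    haveI hdisc : DiscreteTopology L := by
      have hsep : ∃ ε : ℝ, 0 < ε ∧ ∀ x ∈ L, ‖x‖ < ε → x = (0 : Fin n → ℝ) := by
        by_contra hcon
        push_neg at hcon
        have hclosed2 : IsClosed ((H ⊓ W.toAddSubgroup : AddSubgroup (Fin n → ℝ)) :
            Set (Fin n → ℝ)) := by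
          have : ((H ⊓ W.toAddSubgroup : AddSubgroup (Fin n → ℝ)) : Set (Fin n → ℝ))
              = (H : Set (Fin n → ℝ)) ∩ (W : Set (Fin n → ℝ)) := rfl
          rw [this]
          exact hHc.inter hWclosed
        obtain ⟨v, hv0, hvall⟩ := aux_line (H ⊓ W.toAddSubgroup) hclosed2
          (fun ε hε => by
            obtain ⟨x, hxL, hxn, hx0⟩ := hcon ε hε
            exact ⟨x, AddSubgroup.mem_inf.mpr
              ⟨((hLmem x).1 hxL).1, ((hLmem x).1 hxL).2⟩, hx0, hxn⟩)
        have hvV : v ∈ V := (hVmem v).2 fun t => (AddSubgroup.mem_inf.mp (hvall t)).1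
        have hvW : v ∈ W := by
          have h7 := (AddSubgroup.mem_inf.mp (hvall 1)).2
          rw [one_smul] at h7
          exact h7
        exact hv0 (Submodule.disjoint_def.mp hW.disjoint v hvV hvW)
      obtain ⟨ε, hε, hsep⟩ := hsep
      rw [discreteTopology_iff_isOpen_singleton_zero]
      have hset : ({0} : Set L) = (fun x : L => (x : Fin n → ℝ)) ⁻¹' Metric.ball 0 ε := by
        ext x
        simp only [Set.mem_singleton_iff, Set.mem_preimage, Metric.mem_ball, dist_zero_right]
        constructor
        · rintro rfl
          simpa using hε
        · intro hx
          exact Subtype.ext (hsep x x.2 hx)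
      rw [hset]
      exact continuous_subtype_val.isOpen_preimage _ Metric.isOpen_ball
    -- Step 3: decompose u and conclude
    set π := W.projectionOnto V hW.symm with hπdef
    set w : Fin n → ℝ := (π u : Fin n → ℝ) with hwdef
    have huwV : u - w ∈ V := by
      have h5 := Submodule.projection_add_projection_eq_self hW u
      have h8 : u - w = (V.projectionOnto W hW u : Fin n → ℝ) := by
        rw [hwdef, hπdef]
        exact (eq_sub_iff_add_eq.mpr h5).symm
      rw [h8]
      exact Submodule.coe_mem _
    have hπL : ∀ s ∈ H, (π s : Fin n → ℝ) ∈ L := by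
      intro s hs
      refine (hLmem _).2 ⟨?_, Submodule.coe_mem _⟩
      have h5 := Submodule.projection_add_projection_eq_self hW s
      have h9 : (π s : Fin n → ℝ) = s - (V.projectionOnto W hW s : Fin n → ℝ) := by
        rw [hπdef]
        exact eq_sub_iff_add_eq.mpr (by rw [add_comm]; exact h5)
      rw [h9]
      exact H.sub_mem hs (hVH _ (Submodule.coe_mem _))
    have hwL : w ∈ L := by
      refine aux_discrete L w (fun ψ hψ => ?_)
      have hψ'G : ∀ s ∈ S, ∃ z : ℤ, (ψ ∘ₗ (W.subtype ∘ₗ π)) s = (z : ℝ) := by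
        intro s hs
        obtain ⟨z, hz⟩ := hψ _ (hπL s (hSH s hs))
        exact ⟨z, hz⟩
      obtain ⟨z, hz⟩ := hphi (ψ ∘ₗ (W.subtype ∘ₗ π)) hψ'G
      exact ⟨z, hz⟩
    have hwH : w ∈ H := ((hLmem w).1 hwL).1
    have huH : u ∈ H := by
      have h10 := H.add_mem (hVH _ huwV) hwH
      rwa [sub_add_cancel] at h10
    show u ∈ closure S
    rw [← hHS]
    exact huH
end
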